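/- arXiv:2409.10896 — 11 statements merged into one kernel-verified Lean document; each statement's English description precedes it below -/
import Mathlib

section
/- For every nonzero vector s ∈ ℝ^D, the normalized signal-to-noise ratio satisfies NSNR(s) ≥ 4κ(Q)/(κ(Q)+1)², where κ(Q) is the condition number of the matrix ratio Q. -/
open Matrix

section kantAux
variable {n : Type*} [Fintype n] [DecidableEq n]

lemma my_kant_scalar (m M a b c : ℝ) (hm : 0 < m) (hM : 0 < M)
    (ha : 0 < a) (hb : 0 < b) (hc : 0 < c)
    (hkey : a + m * M * b ≤ (m + M) * c) :
    4 * (M / m) / (M / m + 1) ^ 2 ≤ c ^ 2 / (a * b) := by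
  have h1 : 4 * (m * M) * (a * b) ≤ (m + M) ^ 2 * c ^ 2 := by
    nlinarith [sq_nonneg (a - m * M * b), mul_le_mul hkey hkey (by positivity) (by positivity)]
  have h2 : 4 * (M / m) / (M / m + 1) ^ 2 = 4 * (m * M) / (m + M) ^ 2 := by
    field_simp
    ring
  rw [h2, div_le_div_iff₀ (by positivity) (by positivity)]
  nlinarith [h1]

lemma my_loewner {Q : Matrix n n ℝ} (hQ : Q.IsHermitian) (hQpd : Q.PosDef)
    (m M : ℝ) (hm : 0 < m)
    (hlo : ∀ i, m ≤ hQ.eigenvalues i) (hhi : ∀ i, hQ.eigenvalues i ≤ M) :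
    ((m + M) • (1 : Matrix n n ℝ) - Q - (m * M) • Q⁻¹).PosSemidef := by
  set U : Matrix n n ℝ := hQ.eigenvectorUnitary.1 with hU
  have hU1 : star U * U = 1 := Matrix.UnitaryGroup.star_mul_self _
  have hU2 : U * star U = 1 := mul_eq_one_comm.mpr hU1
  set q := hQ.eigenvalues with hq
  have hqpos : ∀ i, 0 < q i := fun i => hQpd.eigenvalues_pos i
  have hspec : Q = U * diagonal q * star U := by
    have := hQ.spectral_theorem
    simpa using this
  have hinv : Q⁻¹ = U * diagonal (fun i => (q i)⁻¹) * star U := by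
    apply inv_eq_right_inv
    rw [hspec]
    simp only [Matrix.mul_assoc]
    rw [show star U * (U * (diagonal (fun i => (q i)⁻¹) * star U))
        = diagonal (fun i => (q i)⁻¹) * star U by
      rw [← Matrix.mul_assoc, hU1, Matrix.one_mul]]
    rw [← Matrix.mul_assoc (diagonal q), diagonal_mul_diagonal]
    rw [show (fun i => q i * (q i)⁻¹) = fun _ => (1:ℝ) from funext fun i =>
      mul_inv_cancel₀ (hqpos i).ne', diagonal_one, Matrix.one_mul, hU2]
  have hd : ∀ i, 0 ≤ (fun i => (m + M) - q i - m * M * (q i)⁻¹) i := by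
    intro i
    have h1 : 0 ≤ (q i - m) * (M - q i) := by nlinarith [hlo i, hhi i]
    have h2 : m * M * (q i)⁻¹ ≤ m + M - q i := by
      rw [show m * M * (q i)⁻¹ = m * M / q i from (div_eq_mul_inv _ _).symm,
        div_le_iff₀ (hqpos i)]
      nlinarith
    simp only
    linarith
  have hkey : (m + M) • (1 : Matrix n n ℝ) - Q - (m * M) • Q⁻¹
      = U * diagonal (fun i => (m + M) - q i - m * M * (q i)⁻¹) * star U := by
    have hdiag : diagonal (fun i => (m + M) - q i - m * M * (q i)⁻¹)
        = (m + M) • (1 : Matrix n n ℝ) - diagonal q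
          - (m * M) • diagonal (fun i => (q i)⁻¹) := by
      ext i j
      rcases eq_or_ne i j with rfl | h
      · simp [smul_eq_mul]
      · simp [diagonal_apply_ne _ h, one_apply_ne h]
    rw [hinv, hspec, hdiag]
    simp only [Matrix.sub_mul, Matrix.mul_sub, Matrix.smul_mul, Matrix.mul_smul,
      Matrix.one_mul, Matrix.mul_one, hU2]
  rw [hkey]
  have := (PosSemidef.diagonal (d := fun i => (m + M) - q i - m * M * (q i)⁻¹)
    (by intro i; exact hd i)).mul_mul_conjTranspose_same U
  simpa [Matrix.star_eq_conjTranspose] using this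
end kantAux


open scoped ComplexOrder in
/-- The positive semidefinite square root of a positive semidefinite matrix
(the definition of `Matrix.PosSemidef.sqrt` in Mathlib of December 2024). -/
noncomputable def Matrix.PosSemidef.sqrt {n 𝕜 : Type*} [Fintype n] [DecidableEq n] [RCLike 𝕜]
    {A : Matrix n n 𝕜} (hA : A.PosSemidef) : Matrix n n 𝕜 :=
  hA.1.eigenvectorUnitary.1 * diagonal ((↑) ∘ (√·) ∘ hA.1.eigenvalues) *
  (star hA.1.eigenvectorUnitary : Matrix n n 𝕜)

lemma my_sqrt_isHermitian {n : Type*} [Fintype n] [DecidableEq n] {A : Matrix n n ℝ}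
    (hA : A.PosSemidef) : hA.sqrt.IsHermitian := by
  unfold Matrix.PosSemidef.sqrt
  simp [IsHermitian, conjTranspose_mul, diagonal_conjTranspose, Matrix.mul_assoc,
    Matrix.star_eq_conjTranspose, conjTranspose_eq_transpose_of_trivial]

lemma my_sqrt_mul_self {n : Type*} [Fintype n] [DecidableEq n] {A : Matrix n n ℝ}
    (hA : A.PosSemidef) : hA.sqrt * hA.sqrt = A := by
  unfold Matrix.PosSemidef.sqrt
  have hU : (star hA.1.eigenvectorUnitary : Matrix n n ℝ) * hA.1.eigenvectorUnitary.1 = 1 :=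
    Matrix.UnitaryGroup.star_mul_self _
  conv_rhs => rw [hA.1.spectral_theorem, Unitary.conjStarAlgAut_apply]
  simp only [Matrix.mul_assoc]
  rw [← Matrix.mul_assoc (star hA.1.eigenvectorUnitary : Matrix n n ℝ), hU, Matrix.one_mul,
    ← Matrix.mul_assoc (diagonal _), diagonal_mul_diagonal]
  congr 3
  funext i
  simp [Real.mul_self_sqrt (hA.eigenvalues_nonneg i)]

/-- Normalized signal-to-noise ratio of target vector `s` for true covariance `C`
and estimated covariance `Ch`:
`NSNR(s) = (sᵀ Ĉ⁻¹ s)² / ((sᵀ Ĉ⁻¹ C Ĉ⁻¹ s)(sᵀ C⁻¹ s))`. -/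
noncomputable def NSNR {D : ℕ} (C Ch : Matrix (Fin D) (Fin D) ℝ) (s : Fin D → ℝ) : ℝ :=
  (s ⬝ᵥ Ch⁻¹ *ᵥ s) ^ 2 / ((s ⬝ᵥ (Ch⁻¹ * C * Ch⁻¹) *ᵥ s) * (s ⬝ᵥ C⁻¹ *ᵥ s))

/-- For every nonzero vector `s`, the NSNR is bounded below by
`4κ(Q)/(κ(Q)+1)²`, where `κ(Q) = q_max/q_min` is the condition number of the
matrix ratio `Q = Ĉ^{-1/2} C Ĉ^{-1/2}`. -/
theorem nsnr_ge_kantorovich_bound {D : ℕ} (hD : 0 < D)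
    (C Ch : Matrix (Fin D) (Fin D) ℝ) (hC : C.PosDef) (hCh : Ch.PosDef)
    (Q : Matrix (Fin D) (Fin D) ℝ)
    (hQdef : Q = hCh.posSemidef.sqrt⁻¹ * C * hCh.posSemidef.sqrt⁻¹)
    (hQ : Q.IsHermitian)
    (qmin qmax κ : ℝ)
    (hqmin : qmin = ⨅ i, hQ.eigenvalues i)
    (hqmax : qmax = ⨆ i, hQ.eigenvalues i)
    (hκ : κ = qmax / qmin)
    (s : Fin D → ℝ) (hs : s ≠ 0) :
    4 * κ / (κ + 1) ^ 2 ≤ NSNR C Ch s := by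
  classical
  haveI : Nonempty (Fin D) := ⟨⟨0, hD⟩⟩
  set S := hCh.posSemidef.sqrt with hSdef
  have hSH : S.IsHermitian := my_sqrt_isHermitian hCh.posSemidef
  have hSS : S * S = Ch := my_sqrt_mul_self hCh.posSemidef
  have hdetS : IsUnit S.det := by
    rw [isUnit_iff_ne_zero]
    intro h
    have : Ch.det = 0 := by rw [← hSS, det_mul, h, mul_zero]
    exact hCh.det_pos.ne' this
  set B := S⁻¹ with hBdef
  have hBS : B * S = 1 := nonsing_inv_mul S hdetS
  have hSB : S * B = 1 := mul_nonsing_inv S hdetS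
  have hBT : Bᵀ = B := by
    have hBH : B.IsHermitian := hSH.inv
    rw [← conjTranspose_eq_transpose_of_trivial]
    exact hBH
  have quad : ∀ (A : Matrix (Fin D) (Fin D) ℝ) (x : Fin D → ℝ),
      x ⬝ᵥ (B * A * B) *ᵥ x = (B *ᵥ x) ⬝ᵥ A *ᵥ (B *ᵥ x) := by
    intro A x
    rw [← mulVec_mulVec, ← mulVec_mulVec, dotProduct_mulVec, ← mulVec_transpose, hBT]
  have hBx : ∀ x : Fin D → ℝ, x ≠ 0 → B *ᵥ x ≠ 0 := by
    intro x hx h0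
    apply hx
    have h1 : S *ᵥ (B *ᵥ x) = x := by rw [mulVec_mulVec, hSB, one_mulVec]
    rw [h0, mulVec_zero] at h1
    exact h1.symm
  have hQpd : Q.PosDef := by
    refine .of_dotProduct_mulVec_pos hQ fun x hx => ?_
    rw [star_trivial, hQdef, quad]
    have := hC.dotProduct_mulVec_pos (hBx x hx)
    rwa [star_trivial] at this
  have hCinv : C * C⁻¹ = 1 := mul_nonsing_inv C (isUnit_iff_ne_zero.mpr hC.det_pos.ne')
  have hQinv : Q⁻¹ = S * C⁻¹ * S := by
    apply inv_eq_right_inv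
    rw [hQdef]
    simp only [Matrix.mul_assoc]
    rw [show B * (S * (C⁻¹ * S)) = C⁻¹ * S by rw [← Matrix.mul_assoc, hBS, Matrix.one_mul],
      show C * (C⁻¹ * S) = S by rw [← Matrix.mul_assoc, hCinv, Matrix.one_mul], hBS]
  have hCh2 : Ch⁻¹ = B * B := by rw [← hSS, Matrix.mul_inv_rev]
  set t := B *ᵥ s with ht
  have e1 : s ⬝ᵥ Ch⁻¹ *ᵥ s = t ⬝ᵥ t := by
    rw [show Ch⁻¹ = B * (1 : Matrix (Fin D) (Fin D) ℝ) * B by rw [Matrix.mul_one, hCh2],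
      quad, one_mulVec]
  have e2 : s ⬝ᵥ (Ch⁻¹ * C * Ch⁻¹) *ᵥ s = t ⬝ᵥ Q *ᵥ t := by
    rw [show Ch⁻¹ * C * Ch⁻¹ = B * Q * B by rw [hCh2, hQdef]; simp only [Matrix.mul_assoc], quad]
  have e3 : s ⬝ᵥ C⁻¹ *ᵥ s = t ⬝ᵥ Q⁻¹ *ᵥ t := by
    rw [show C⁻¹ = B * Q⁻¹ * B by
      rw [hQinv]
      simp only [Matrix.mul_assoc]
      rw [hSB, Matrix.mul_one, ← Matrix.mul_assoc, hBS, Matrix.one_mul], quad]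
  have hlo : ∀ i, qmin ≤ hQ.eigenvalues i := fun i =>
    hqmin ▸ ciInf_le (Set.Finite.bddBelow (Set.finite_range _)) i
  have hhi : ∀ i, hQ.eigenvalues i ≤ qmax := fun i =>
    hqmax ▸ le_ciSup (Set.Finite.bddAbove (Set.finite_range _)) i
  have hmpos : 0 < qmin := by
    obtain ⟨i₀, -, hmin⟩ := Finset.exists_min_image Finset.univ hQ.eigenvalues
      ⟨⟨0, hD⟩, Finset.mem_univ _⟩
    have h1 : hQ.eigenvalues i₀ ≤ qmin := hqmin ▸ le_ciInf fun j => hmin j (Finset.mem_univ j)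
    exact lt_of_lt_of_le (hQpd.eigenvalues_pos i₀) h1
  have hMpos : 0 < qmax := lt_of_lt_of_le (hQpd.eigenvalues_pos ⟨0, hD⟩) (hhi ⟨0, hD⟩)
  have ht0 : t ≠ 0 := hBx s hs
  have ha : 0 < t ⬝ᵥ Q *ᵥ t := by have := hQpd.dotProduct_mulVec_pos ht0; rwa [star_trivial] at this
  have hb : 0 < t ⬝ᵥ Q⁻¹ *ᵥ t := by have := hQpd.inv.dotProduct_mulVec_pos ht0; rwa [star_trivial] at this
  have hc : 0 < t ⬝ᵥ t := by
    refine lt_of_le_of_ne (Finset.sum_nonneg fun i _ => mul_self_nonneg _) (Ne.symm ?_)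
    exact fun h => ht0 (dotProduct_self_eq_zero.mp h)
  have hpsd := my_loewner hQ hQpd qmin qmax hmpos hlo hhi
  have h0 := hpsd.dotProduct_mulVec_nonneg t
  rw [star_trivial] at h0
  have hexp : t ⬝ᵥ ((qmin + qmax) • (1 : Matrix (Fin D) (Fin D) ℝ) - Q
        - (qmin * qmax) • Q⁻¹) *ᵥ t
      = (qmin + qmax) * (t ⬝ᵥ t) - t ⬝ᵥ Q *ᵥ t - qmin * qmax * (t ⬝ᵥ Q⁻¹ *ᵥ t) := by
    simp [sub_mulVec, smul_mulVec, dotProduct_sub, dotProduct_smul, one_mulVec,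
      smul_eq_mul]
  rw [hexp] at h0
  have hkanto := my_kant_scalar qmin qmax (t ⬝ᵥ Q *ᵥ t) (t ⬝ᵥ Q⁻¹ *ᵥ t) (t ⬝ᵥ t)
    hmpos hMpos ha hb hc (by linarith)
  rw [NSNR, e1, e2, e3, hκ]
  exact hkanto
end

section
/- Let u_min and u_max be unit-norm eigenvectors of the matrix ratio Q corresponding to its smallest eigenvalue q_min and largest eigenvalue q_max respectively, and set s = Ĉ^{1/2}·(u_min + u_max)/√2. Then NSNR(s) = 4κ(Q)/(κ(Q)+1)²; that is, the Kantorovich lower bound on the NSNR is attained at this vector. -/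
open Matrix

private lemma quad_conj' {D : ℕ} (S M : Matrix (Fin D) (Fin D) ℝ) (hS : Sᵀ = S)
    (x y : Fin D → ℝ) :
    x ⬝ᵥ (S * M * S) *ᵥ y = (S *ᵥ x) ⬝ᵥ M *ᵥ (S *ᵥ y) := by
  rw [← mulVec_mulVec, ← mulVec_mulVec, dotProduct_mulVec, ← hS, vecMul_transpose, hS]

/-- If `u_min`, `u_max` are unit-norm eigenvectors of the matrix
ratio `Q` for its smallest and largest eigenvalues (with `q_min < q_max`), then the
vector `s = Ĉ^{1/2} (u_min + u_max)/√2` attains the Kantorovich lower bound: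
`NSNR(s) = 4κ(Q)/(κ(Q)+1)²`. -/
theorem nsnr_eq_kantorovich_bound_at_extremal_vector {D : ℕ} (hD : 0 < D)
    (C Ch : Matrix (Fin D) (Fin D) ℝ) (hC : C.PosDef) (hCh : Ch.PosDef)
    (Q : Matrix (Fin D) (Fin D) ℝ)
    (hQdef : Q = (hCh.posSemidef.isHermitian.cfc Real.sqrt)⁻¹ * C * (hCh.posSemidef.isHermitian.cfc Real.sqrt)⁻¹)
    (hQ : Q.IsHermitian)
    (qmin qmax κ : ℝ)
    (hqmin : qmin = ⨅ i, hQ.eigenvalues i)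
    (hqmax : qmax = ⨆ i, hQ.eigenvalues i)
    (hlt : qmin < qmax)
    (hκ : κ = qmax / qmin)
    (umin umax : Fin D → ℝ)
    (huminEig : Q *ᵥ umin = qmin • umin) (huminUnit : umin ⬝ᵥ umin = 1)
    (humaxEig : Q *ᵥ umax = qmax • umax) (humaxUnit : umax ⬝ᵥ umax = 1)
    (s : Fin D → ℝ)
    (hs : s = (Real.sqrt 2)⁻¹ • ((hCh.posSemidef.isHermitian.cfc Real.sqrt) *ᵥ (umin + umax))) :
    NSNR C Ch s = 4 * κ / (κ + 1) ^ 2 := by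
  set R := hCh.posSemidef.isHermitian.cfc Real.sqrt with hRdef
  have hRR : R * R = Ch := by
    rw [hRdef, ← Matrix.IsHermitian.cfc_eq, ← cfc_mul (a := Ch) Real.sqrt Real.sqrt]
    conv_rhs => rw [← cfc_id' ℝ Ch (ha := hCh.posSemidef.isHermitian)]
    refine cfc_congr ?_
    intro x hx
    rw [hCh.posSemidef.isHermitian.spectrum_real_eq_range_eigenvalues] at hx
    obtain ⟨i, rfl⟩ := hx
    exact Real.mul_self_sqrt (hCh.eigenvalues_pos i).le
  have hRsym : Rᵀ = R := by
    have h : IsSelfAdjoint R := by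
      rw [hRdef, ← Matrix.IsHermitian.cfc_eq]; exact cfc_predicate _ _
    have h' : Rᴴ = R := h
    rwa [conjTranspose_eq_transpose_of_trivial] at h'
  have hdetR : IsUnit R.det := by
    have h : R.det * R.det = Ch.det := by rw [← det_mul, hRR]
    have hne : R.det ≠ 0 := by
      intro h0
      have := hCh.det_pos
      rw [← h, h0, mul_zero] at this
      exact lt_irrefl 0 this
    exact hne.isUnit
  have hRRinv : R * R⁻¹ = 1 := mul_nonsing_inv R hdetR
  have hRinvR : R⁻¹ * R = 1 := nonsing_inv_mul R hdetR
  have hRinvsym : (R⁻¹)ᵀ = R⁻¹ := by rw [transpose_nonsing_inv, hRsym]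
  have conj_cancel : ∀ X : Matrix (Fin D) (Fin D) ℝ, R * (R⁻¹ * X * R⁻¹) * R = X := by
    intro X
    rw [← Matrix.mul_assoc, ← Matrix.mul_assoc, hRRinv, Matrix.one_mul, Matrix.mul_assoc,
      hRinvR, Matrix.mul_one]
  have hChinv : Ch⁻¹ = R⁻¹ * R⁻¹ := by rw [← hRR, Matrix.mul_inv_rev]
  have A1 : R * Ch⁻¹ * R = 1 := by
    rw [hChinv, ← Matrix.mul_assoc, hRRinv, Matrix.one_mul, hRinvR]
  have A2 : R * (Ch⁻¹ * C * Ch⁻¹) * R = Q := by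
    have h : Ch⁻¹ * C * Ch⁻¹ = R⁻¹ * (R⁻¹ * C * R⁻¹) * R⁻¹ := by
      rw [hChinv]; noncomm_ring
    rw [h, conj_cancel, hQdef]
  have hCRQR : C = R * Q * R := by rw [hQdef, conj_cancel]
  have A3 : R * C⁻¹ * R = Q⁻¹ := by
    have h : C⁻¹ = R⁻¹ * (Q⁻¹ * R⁻¹) := by
      rw [hCRQR, Matrix.mul_inv_rev, Matrix.mul_inv_rev]
    rw [h, ← Matrix.mul_assoc, ← Matrix.mul_assoc, hRRinv, Matrix.one_mul,
      Matrix.mul_assoc, hRinvR, Matrix.mul_one]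
  have hQpd : Q.PosDef := by
    refine PosDef.of_dotProduct_mulVec_pos hQ (fun x hx => ?_)
    have hxne : R⁻¹ *ᵥ x ≠ 0 := by
      intro h0
      apply hx
      have hxx : R *ᵥ (R⁻¹ *ᵥ x) = x := by rw [mulVec_mulVec, hRRinv, one_mulVec]
      rw [h0, mulVec_zero] at hxx
      exact hxx.symm
    have hpos := hC.dotProduct_mulVec_pos hxne
    rw [hQdef]
    simpa [quad_conj' R⁻¹ C hRinvsym x x, star_trivial] using hpos
  have hQunit : IsUnit Q.det := (isUnit_iff_isUnit_det Q).mp hQpd.isUnit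
  have hQsym : Qᵀ = Q := by
    have h : Qᴴ = Q := hQ
    rwa [conjTranspose_eq_transpose_of_trivial] at h
  have hqminpos : 0 < qmin := by
    have hune : umin ≠ 0 := by
      intro h; rw [h] at huminUnit; simp at huminUnit
    have hp := hQpd.dotProduct_mulVec_pos hune
    rw [star_trivial, huminEig, dotProduct_smul, huminUnit] at hp
    simpa using hp
  have hqmaxpos : 0 < qmax := lt_trans hqminpos hlt
  have hperp : umin ⬝ᵥ umax = 0 := by
    have h1 : umin ⬝ᵥ (Q *ᵥ umax) = qmax * (umin ⬝ᵥ umax) := by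
      rw [humaxEig, dotProduct_smul, smul_eq_mul]
    have h2 : umin ⬝ᵥ (Q *ᵥ umax) = qmin * (umin ⬝ᵥ umax) := by
      rw [dotProduct_mulVec, ← hQsym, vecMul_transpose, huminEig, smul_dotProduct, smul_eq_mul]
    have h3 : (qmax - qmin) * (umin ⬝ᵥ umax) = 0 := by
      rw [sub_mul, ← h1, ← h2, sub_self]
    rcases mul_eq_zero.mp h3 with h | h
    · exact absurd (sub_eq_zero.mp h) hlt.ne'
    · exact h
  have hperp' : umax ⬝ᵥ umin = 0 := by rw [dotProduct_comm]; exact hperp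
  have hQinvEig : ∀ (q : ℝ) (u : Fin D → ℝ), q ≠ 0 → Q *ᵥ u = q • u → Q⁻¹ *ᵥ u = q⁻¹ • u := by
    intro q u hq hu
    have h1 : Q⁻¹ *ᵥ (Q *ᵥ u) = u := by
      rw [mulVec_mulVec, nonsing_inv_mul Q hQunit, one_mulVec]
    rw [hu, mulVec_smul] at h1
    calc Q⁻¹ *ᵥ u = q⁻¹ • (q • (Q⁻¹ *ᵥ u)) := by
          rw [smul_smul, inv_mul_cancel₀ hq, one_smul]
      _ = q⁻¹ • u := by rw [h1]
  have hc : (Real.sqrt 2)⁻¹ * (Real.sqrt 2)⁻¹ = 1/2 := by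
    rw [← mul_inv, Real.mul_self_sqrt (by norm_num : (2:ℝ) ≥ 0)]
    norm_num
  have key : ∀ M : Matrix (Fin D) (Fin D) ℝ,
      s ⬝ᵥ M *ᵥ s = (1/2) * ((umin + umax) ⬝ᵥ (R * M * R) *ᵥ (umin + umax)) := by
    intro M
    rw [hs, smul_dotProduct, mulVec_smul, dotProduct_smul, ← quad_conj' R M hRsym,
      smul_eq_mul, smul_eq_mul, ← mul_assoc, hc]
  have T1 : s ⬝ᵥ Ch⁻¹ *ᵥ s = 1 := by
    rw [key, A1, one_mulVec, dotProduct_add, add_dotProduct, add_dotProduct,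
      huminUnit, humaxUnit, hperp, hperp']
    norm_num
  have T2 : s ⬝ᵥ (Ch⁻¹ * C * Ch⁻¹) *ᵥ s = (qmin + qmax) / 2 := by
    rw [key, A2, mulVec_add, huminEig, humaxEig, dotProduct_add, add_dotProduct,
      add_dotProduct, dotProduct_smul, dotProduct_smul, dotProduct_smul, dotProduct_smul,
      huminUnit, humaxUnit, hperp, hperp']
    simp only [smul_eq_mul]
    ring
  have T3 : s ⬝ᵥ C⁻¹ *ᵥ s = (qmin⁻¹ + qmax⁻¹) / 2 := by
    rw [key, A3, mulVec_add, hQinvEig qmin umin hqminpos.ne' huminEig,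
      hQinvEig qmax umax hqmaxpos.ne' humaxEig, dotProduct_add, add_dotProduct,
      add_dotProduct, dotProduct_smul, dotProduct_smul, dotProduct_smul, dotProduct_smul,
      huminUnit, humaxUnit, hperp, hperp']
    simp only [smul_eq_mul]
    ring
  rw [NSNR, T1, T2, T3, hκ]
  have h1 : qmin ≠ 0 := hqminpos.ne'
  have h2 : qmax ≠ 0 := hqmaxpos.ne'
  have h3 : qmin + qmax ≠ 0 := by positivity
  field_simp
  ring
end

section
/- Kantorovich inequality: for every D×D real symmetric positive definite matrix Q with smallest eigenvalue q_min and largest eigenvalue q_max, and every vector y ∈ ℝ^D with yᵀy = 1, one has (yᵀ Q y)(yᵀ Q⁻¹ y) ≤ (q_min + q_max)² / (4 q_min q_max). -/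
open Matrix Finset

lemma kantorovich_scalar {n : Type*} [Fintype n] [Nonempty n] (c l : n → ℝ)
    (hc : ∀ i, 0 ≤ c i) (hsum : ∑ i, c i = 1) (m M : ℝ) (hm : 0 < m)
    (hlo : ∀ i, m ≤ l i) (hhi : ∀ i, l i ≤ M) :
    (∑ i, c i * l i) * (∑ i, c i * (l i)⁻¹) ≤ (m + M) ^ 2 / (4 * m * M) := by
  obtain ⟨i0⟩ := ‹Nonempty n›
  have hM : 0 < M := hm.trans_le ((hlo i0).trans (hhi i0))
  set s := ∑ i, c i * l i with hs
  have hs0 : 0 ≤ s := Finset.sum_nonneg fun i _ => mul_nonneg (hc i) (hm.le.trans (hlo i))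
  have h1 : m * M * (∑ i, c i * (l i)⁻¹) ≤ (m + M) - s := by
    have key : ∀ i, m * M * (c i * (l i)⁻¹) ≤ c i * (m + M - l i) := by
      intro i
      have hli : 0 < l i := hm.trans_le (hlo i)
      rw [show m * M * (c i * (l i)⁻¹) = c i * (m * M / l i) by field_simp]
      apply mul_le_mul_of_nonneg_left _ (hc i)
      rw [div_le_iff₀ hli]
      nlinarith [hlo i, hhi i]
    calc m * M * (∑ i, c i * (l i)⁻¹) = ∑ i, m * M * (c i * (l i)⁻¹) := by
          rw [Finset.mul_sum]
      _ ≤ ∑ i, c i * (m + M - l i) := Finset.sum_le_sum fun i _ => key i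
      _ = (m + M) - s := by
          simp only [mul_sub, mul_add, Finset.sum_sub_distrib, Finset.sum_add_distrib,
            ← Finset.sum_mul, hsum]
          ring
  have hT0 : 0 ≤ ∑ i, c i * (l i)⁻¹ := Finset.sum_nonneg fun i _ =>
    mul_nonneg (hc i) (inv_nonneg.2 (hm.le.trans (hlo i)))
  rw [le_div_iff₀ (by positivity)]
  nlinarith [mul_le_mul_of_nonneg_left h1 hs0, sq_nonneg (m + M - 2 * s)]

/-- **Kantorovich inequality.** For every real symmetric positive
definite `D × D` matrix `Q` with smallest eigenvalue `q_min` and largest eigenvalue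
`q_max`, and every unit vector `y` (i.e. `yᵀy = 1`),
`(yᵀ Q y)(yᵀ Q⁻¹ y) ≤ (q_min + q_max)² / (4 q_min q_max)`. -/
theorem kantorovich_inequality {D : ℕ} (hD : 0 < D)
    (Q : Matrix (Fin D) (Fin D) ℝ) (hQ : Q.PosDef)
    (qmin qmax : ℝ)
    (hqmin : qmin = ⨅ i, hQ.isHermitian.eigenvalues i)
    (hqmax : qmax = ⨆ i, hQ.isHermitian.eigenvalues i)
    (y : Fin D → ℝ) (hy : y ⬝ᵥ y = 1) :
    (y ⬝ᵥ Q *ᵥ y) * (y ⬝ᵥ Q⁻¹ *ᵥ y) ≤ (qmin + qmax) ^ 2 / (4 * qmin * qmax) := by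
  haveI : Nonempty (Fin D) := ⟨⟨0, hD⟩⟩
  set U : Matrix (Fin D) (Fin D) ℝ :=
    (hQ.isHermitian.eigenvectorUnitary : Matrix (Fin D) (Fin D) ℝ) with hU
  set l : Fin D → ℝ := hQ.isHermitian.eigenvalues with hl
  have hUU : star U * U = 1 := Unitary.coe_star_mul_self _
  have hUU' : U * star U = 1 := Unitary.coe_mul_star_self _
  have hspec : Q = U * diagonal l * star U := by
    have := hQ.isHermitian.spectral_theorem
    simpa using this
  set x : Fin D → ℝ := star U *ᵥ y with hx
  have key : ∀ M : Matrix (Fin D) (Fin D) ℝ, y ⬝ᵥ (U * M * star U) *ᵥ y = x ⬝ᵥ M *ᵥ x := by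
    intro M
    have hstar : star U = Uᵀ := by
      ext i j; simp [star_eq_conjTranspose, conjTranspose_apply]
    rw [hx, hstar, ← mulVec_mulVec, ← mulVec_mulVec, dotProduct_mulVec, ← mulVec_transpose]
  have hxx : ∑ i, x i ^ 2 = 1 := by
    have h1 : x ⬝ᵥ x = 1 := by
      have := key 1
      rw [mul_one, hUU'] at this
      simpa [hy] using this.symm
    simpa [dotProduct, sq] using h1
  have hform : y ⬝ᵥ Q *ᵥ y = ∑ i, x i ^ 2 * l i := by
    rw [hspec, key]
    simp [dotProduct, mulVec_diagonal, sq]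
    exact Finset.sum_congr rfl fun i _ => by ring
  have hdd : diagonal l * diagonal l⁻¹ = 1 := by
    rw [diagonal_mul_diagonal]
    convert diagonal_one
    simp [mul_inv_cancel₀ (hQ.eigenvalues_pos _).ne']
    exact mul_inv_cancel₀ (hQ.eigenvalues_pos _).ne'
  have hinv : Q⁻¹ = U * diagonal l⁻¹ * star U := by
    apply inv_eq_right_inv
    rw [hspec]
    have e : U * diagonal l * star U * (U * diagonal l⁻¹ * star U)
        = U * (diagonal l * (star U * U) * diagonal l⁻¹) * star U := by
      noncomm_ring
    rw [e, hUU, mul_one, hdd, mul_one, hUU']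
  have hform' : y ⬝ᵥ Q⁻¹ *ᵥ y = ∑ i, x i ^ 2 * (l i)⁻¹ := by
    rw [hinv, key]
    simp [dotProduct, mulVec_diagonal, sq]
    exact Finset.sum_congr rfl fun i _ => by ring
  have hlo : ∀ i, qmin ≤ l i := fun i => hqmin ▸ ciInf_le (Finite.bddBelow_range l) i
  have hhi : ∀ i, l i ≤ qmax := fun i => hqmax ▸ le_ciSup (Finite.bddAbove_range l) i
  have hm : 0 < qmin := by
    obtain ⟨i0, hi0⟩ := Finite.exists_min l
    have : qmin = l i0 :=
      le_antisymm (hqmin ▸ ciInf_le (Finite.bddBelow_range l) i0)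
        (hqmin ▸ le_ciInf hi0)
    rw [this]
    exact hQ.eigenvalues_pos i0
  rw [hform, hform']
  exact kantorovich_scalar (fun i => x i ^ 2) l (fun i => sq_nonneg _) hxx qmin qmax hm hlo hhi
end

section
/- Equality case of the Kantorovich inequality: if u_min and u_max are unit-norm eigenvectors of Q corresponding to its smallest eigenvalue q_min and largest eigenvalue q_max, and y = (u_min + u_max)/√2, then yᵀy = 1 and (yᵀ Q y)(yᵀ Q⁻¹ y) = (q_min + q_max)² / (4 q_min q_max). -/
open Matrix

/-- **equality case of the Kantorovich inequality.** If `u_min` and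
`u_max` are unit-norm eigenvectors of the symmetric positive definite matrix `Q`
corresponding to its smallest eigenvalue `q_min` and largest eigenvalue `q_max`
(with `q_min < q_max`), and `y = (u_min + u_max)/√2`, then `yᵀy = 1` and
`(yᵀ Q y)(yᵀ Q⁻¹ y) = (q_min + q_max)² / (4 q_min q_max)`. -/
theorem kantorovich_equality_case {D : ℕ} (hD : 0 < D)
    (Q : Matrix (Fin D) (Fin D) ℝ) (hQ : Q.PosDef)
    (qmin qmax : ℝ)
    (hqmin : qmin = ⨅ i, hQ.isHermitian.eigenvalues i)
    (hqmax : qmax = ⨆ i, hQ.isHermitian.eigenvalues i)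
    (hlt : qmin < qmax)
    (umin umax : Fin D → ℝ)
    (huminEig : Q *ᵥ umin = qmin • umin) (huminUnit : umin ⬝ᵥ umin = 1)
    (humaxEig : Q *ᵥ umax = qmax • umax) (humaxUnit : umax ⬝ᵥ umax = 1)
    (y : Fin D → ℝ) (hy : y = (Real.sqrt 2)⁻¹ • (umin + umax)) :
    y ⬝ᵥ y = 1 ∧
      (y ⬝ᵥ Q *ᵥ y) * (y ⬝ᵥ Q⁻¹ *ᵥ y) = (qmin + qmax) ^ 2 / (4 * qmin * qmax) := by
  have hminne : umin ≠ 0 := by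
    intro h; rw [h] at huminUnit; simp at huminUnit
  have hmaxne : umax ≠ 0 := by
    intro h; rw [h] at humaxUnit; simp at humaxUnit
  -- positivity of eigenvalues
  have hqminpos : 0 < qmin := by
    have := hQ.dotProduct_mulVec_pos hminne
    rw [huminEig] at this
    simpa [dotProduct_smul, huminUnit] using this
  have hqmaxpos : 0 < qmax := lt_trans hqminpos hlt
  -- symmetry
  have hsymm : Qᵀ = Q := by
    have := hQ.isHermitian
    simpa [Matrix.IsHermitian, Matrix.conjTranspose_eq_transpose_of_trivial] using this
  -- orthogonality
  have horth : umin ⬝ᵥ umax = 0 := by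
    have h1 : umin ⬝ᵥ (Q *ᵥ umax) = qmax * (umin ⬝ᵥ umax) := by
      rw [humaxEig]; simp [dotProduct_smul]
    have h2 : umin ⬝ᵥ (Q *ᵥ umax) = qmin * (umin ⬝ᵥ umax) := by
      rw [Matrix.dotProduct_mulVec, ← Matrix.mulVec_transpose, hsymm, huminEig]
      simp [smul_dotProduct]
    have : (qmax - qmin) * (umin ⬝ᵥ umax) = 0 := by linarith [h1, h2]
    rcases mul_eq_zero.mp this with h | h
    · exact absurd h (by linarith)
    · exact h
  have horth' : umax ⬝ᵥ umin = 0 := by rwa [dotProduct_comm] at horth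
  -- inverse eigenvector equations
  have hinv : Q⁻¹ * Q = 1 := Matrix.nonsing_inv_mul Q (isUnit_iff_ne_zero.mpr hQ.det_pos.ne')
  have hinvmin : Q⁻¹ *ᵥ umin = qmin⁻¹ • umin := by
    have : Q⁻¹ *ᵥ (Q *ᵥ umin) = umin := by
      rw [Matrix.mulVec_mulVec, hinv, Matrix.one_mulVec]
    rw [huminEig, Matrix.mulVec_smul] at this
    conv_rhs => rw [← this]
    rw [smul_smul, inv_mul_cancel₀ hqminpos.ne', one_smul]
  have hinvmax : Q⁻¹ *ᵥ umax = qmax⁻¹ • umax := by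
    have : Q⁻¹ *ᵥ (Q *ᵥ umax) = umax := by
      rw [Matrix.mulVec_mulVec, hinv, Matrix.one_mulVec]
    rw [humaxEig, Matrix.mulVec_smul] at this
    conv_rhs => rw [← this]
    rw [smul_smul, inv_mul_cancel₀ hqmaxpos.ne', one_smul]
  have hs2 : (Real.sqrt 2)⁻¹ * (Real.sqrt 2)⁻¹ = 2⁻¹ := by
    rw [← mul_inv]
    norm_num [Real.mul_self_sqrt]
  constructor
  · rw [hy]
    simp only [smul_dotProduct, dotProduct_smul, add_dotProduct, dotProduct_add,
      huminUnit, humaxUnit, horth, horth', smul_eq_mul]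
    linear_combination 2 * hs2
  · have hQy : y ⬝ᵥ Q *ᵥ y = (qmin + qmax) / 2 := by
      rw [hy]
      simp only [Matrix.mulVec_smul, Matrix.mulVec_add, huminEig, humaxEig,
        smul_dotProduct, dotProduct_smul, add_dotProduct, dotProduct_add,
        huminUnit, humaxUnit, horth, horth', smul_eq_mul]
      linear_combination (qmin + qmax) * hs2
    have hQiy : y ⬝ᵥ Q⁻¹ *ᵥ y = (qmin⁻¹ + qmax⁻¹) / 2 := by
      rw [hy]
      simp only [Matrix.mulVec_smul, Matrix.mulVec_add, hinvmin, hinvmax,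
        smul_dotProduct, dotProduct_smul, add_dotProduct, dotProduct_add,
        huminUnit, humaxUnit, horth, horth', smul_eq_mul]
      linear_combination (qmin⁻¹ + qmax⁻¹) * hs2
    rw [hQy, hQiy]
    field_simp
    ring
end

section
/- Symmetry of the worst-case NSNR: NSNR_min(C, Ĉ) = NSNR_min(Ĉ, C). -/
open Matrix

private theorem conj_dot {D : ℕ} (L M : Matrix (Fin D) (Fin D) ℝ) (s : Fin D → ℝ) :
    (L *ᵥ s) ⬝ᵥ M *ᵥ (L *ᵥ s) = s ⬝ᵥ (Lᵀ * M * L) *ᵥ s := by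
  rw [mulVec_mulVec, dotProduct_mulVec, dotProduct_mulVec, ← vecMul_vecMul]
  congr 1
  rw [← vecMul_transpose, vecMul_vecMul, Matrix.mul_assoc]
  rw [vecMul_vecMul]

open scoped MatrixOrder in
private theorem key {D : ℕ} (C Ch : Matrix (Fin D) (Fin D) ℝ)
    (hC : C.PosDef) (hCh : Ch.PosDef) :
    ∃ L : Matrix (Fin D) (Fin D) ℝ, IsUnit L ∧
      Lᵀ * C⁻¹ * L = Ch⁻¹ ∧
      Lᵀ * (C⁻¹ * Ch * C⁻¹) * L = C⁻¹ ∧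
      Lᵀ * Ch⁻¹ * L = Ch⁻¹ * C * Ch⁻¹ := by
  set P := CFC.sqrt Ch with hPdef
  have hP2 : P * P = Ch := CFC.sqrt_mul_sqrt_self Ch hCh.posSemidef.nonneg
  have hPsym : Pᵀ = P := by
    have h := (Matrix.nonneg_iff_posSemidef.mp (CFC.sqrt_nonneg Ch)).isHermitian
    rwa [IsHermitian, conjTranspose_eq_transpose_of_trivial] at h
  have hPdetmul : P.det * P.det = Ch.det := by rw [← det_mul, hP2]
  have hPunit : IsUnit P := by
    rw [Matrix.isUnit_iff_isUnit_det, isUnit_iff_ne_zero]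
    intro h
    rw [h, zero_mul] at hPdetmul
    exact hCh.det_pos.ne' hPdetmul.symm
  have hQpsd : PosSemidef (P * C⁻¹ * P) := by
    have h := hC.inv.posSemidef.mul_mul_conjTranspose_same P
    rwa [conjTranspose_eq_transpose_of_trivial, hPsym] at h
  set Q := CFC.sqrt (P * C⁻¹ * P) with hQdef
  have hQ2 : Q * Q = P * C⁻¹ * P := CFC.sqrt_mul_sqrt_self _ hQpsd.nonneg
  have hQsym : Qᵀ = Q := by
    have h := (Matrix.nonneg_iff_posSemidef.mp (CFC.sqrt_nonneg (P * C⁻¹ * P))).isHermitian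
    rwa [IsHermitian, conjTranspose_eq_transpose_of_trivial] at h
  have hQunit : IsUnit Q := by
    rw [Matrix.isUnit_iff_isUnit_det]
    have : IsUnit (Q.det * Q.det) := by
      rw [← det_mul, hQ2]
      exact ((hPunit.mul hC.inv.isUnit).mul hPunit).map detMonoidHom
    exact isUnit_of_mul_isUnit_left this
  have hCdet : IsUnit C.det := (Matrix.isUnit_iff_isUnit_det C).mp hC.isUnit
  have hPdet : IsUnit P.det := (Matrix.isUnit_iff_isUnit_det P).mp hPunit
  haveI := hPunit.invertible
  haveI := hQunit.invertible
  haveI := hC.isUnit.invertible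
  have hLT : (P * Q⁻¹ * P⁻¹)ᵀ = P⁻¹ * Q⁻¹ * P := by
    rw [transpose_mul, transpose_mul, transpose_nonsing_inv, transpose_nonsing_inv,
      hPsym, hQsym, Matrix.mul_assoc]
  have hCinv : C⁻¹ = P⁻¹ * (Q * Q) * P⁻¹ := by
    rw [hQ2]
    simp [Matrix.mul_assoc, Matrix.mul_inv_cancel_left_of_invertible,
      Matrix.inv_mul_cancel_left_of_invertible]
  have hCeq : C = P * (Q⁻¹ * Q⁻¹) * P := by
    have h1 : C = (P⁻¹ * (Q * Q) * P⁻¹)⁻¹ := by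
      rw [← hCinv, Matrix.nonsing_inv_nonsing_inv _ hCdet]
    rw [h1, Matrix.mul_inv_rev, Matrix.mul_inv_rev,
      Matrix.nonsing_inv_nonsing_inv _ hPdet, Matrix.mul_inv_rev]
    simp [Matrix.mul_assoc]
  refine ⟨P * Q⁻¹ * P⁻¹, (hPunit.mul (Matrix.isUnit_nonsing_inv_iff.mpr hQunit)).mul
    (Matrix.isUnit_nonsing_inv_iff.mpr hPunit), ?_, ?_, ?_⟩
  · rw [hLT, hCinv, ← hP2, Matrix.mul_inv_rev]
    simp [Matrix.mul_assoc, Matrix.mul_inv_cancel_left_of_invertible,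
      Matrix.inv_mul_cancel_left_of_invertible]
  · rw [hLT, hCinv, ← hP2]
    simp [Matrix.mul_assoc, Matrix.mul_inv_cancel_left_of_invertible,
      Matrix.inv_mul_cancel_left_of_invertible]
  · rw [hLT, hCeq, ← hP2, Matrix.mul_inv_rev]
    simp [Matrix.mul_assoc, Matrix.mul_inv_cancel_left_of_invertible,
      Matrix.inv_mul_cancel_left_of_invertible]

/-- Worst-case NSNR: the infimum of `NSNR` over nonzero target vectors. -/
noncomputable def NSNRmin {D : ℕ} (C Ch : Matrix (Fin D) (Fin D) ℝ) : ℝ :=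
  ⨅ s : {s : Fin D → ℝ // s ≠ 0}, NSNR C Ch s.1

private theorem nsnr_nonneg {D : ℕ} (C Ch : Matrix (Fin D) (Fin D) ℝ)
    (hC : C.PosDef) (hCh : Ch.PosDef) (s : Fin D → ℝ) : 0 ≤ NSNR C Ch s := by
  have h1 : PosSemidef (Ch⁻¹ * C * Ch⁻¹) := by
    have h := hC.posSemidef.mul_mul_conjTranspose_same Ch⁻¹
    rwa [(hCh.inv.isHermitian : Ch⁻¹ᴴ = Ch⁻¹)] at h
  have ha : 0 ≤ s ⬝ᵥ (Ch⁻¹ * C * Ch⁻¹) *ᵥ s := by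
    have := h1.dotProduct_mulVec_nonneg s; simpa using this
  have hb : 0 ≤ s ⬝ᵥ C⁻¹ *ᵥ s := by
    have := hC.inv.posSemidef.dotProduct_mulVec_nonneg s; simpa using this
  exact div_nonneg (sq_nonneg _) (mul_nonneg ha hb)

private theorem nsnr_step {D : ℕ} (C Ch : Matrix (Fin D) (Fin D) ℝ)
    (hC : C.PosDef) (hCh : Ch.PosDef) (hD : 0 < D) : NSNRmin C Ch ≤ NSNRmin Ch C := by
  haveI : Nonempty {s : Fin D → ℝ // s ≠ 0} :=
    ⟨⟨fun _ => 1, fun h => one_ne_zero (congrFun h ⟨0, hD⟩)⟩⟩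
  obtain ⟨L, hL, h1, h2, h3⟩ := key Ch C hCh hC
  have bdd : BddBelow (Set.range fun s : {s : Fin D → ℝ // s ≠ 0} => NSNR C Ch s.1) := by
    refine ⟨0, ?_⟩
    rintro x ⟨s, rfl⟩
    exact nsnr_nonneg C Ch hC hCh s.1
  refine le_ciInf fun u => ?_
  have hu : L *ᵥ u.1 ≠ 0 := by
    intro h
    exact u.2 ((Matrix.mulVec_injective_iff_isUnit.mpr hL) (h.trans (mulVec_zero L).symm))
  have heq : NSNR C Ch (L *ᵥ u.1) = NSNR Ch C u.1 := by
    rw [NSNR, NSNR, conj_dot, conj_dot, conj_dot, h1, h2, h3, mul_comm]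
  calc NSNRmin C Ch ≤ NSNR C Ch (L *ᵥ u.1) := ciInf_le bdd ⟨L *ᵥ u.1, hu⟩
    _ = NSNR Ch C u.1 := heq

/-- **symmetry of the worst-case NSNR.**
`NSNR_min(C, Ĉ) = NSNR_min(Ĉ, C)`. -/
theorem nsnrMin_symm {D : ℕ} (hD : 0 < D)
    (C Ch : Matrix (Fin D) (Fin D) ℝ) (hC : C.PosDef) (hCh : Ch.PosDef) :
    NSNRmin C Ch = NSNRmin Ch C :=
  le_antisymm (nsnr_step C Ch hC hCh hD) (nsnr_step Ch C hCh hC hD)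
end

section
/- The worst-case NSNR satisfies NSNR_min(C, Ĉ) ≤ 1, with equality if and only if C = α Ĉ for some real α > 0. -/
open Matrix

section Aux

variable {D : ℕ}

/-- Positivity of the quadratic form of a real positive definite matrix. -/
lemma posdef_quad_pos {C : Matrix (Fin D) (Fin D) ℝ} (hC : C.PosDef)
    {x : Fin D → ℝ} (hx : x ≠ 0) : 0 < x ⬝ᵥ C *ᵥ x := by
  have := hC.dotProduct_mulVec_pos hx
  simpa using this

lemma symm_bilin {C : Matrix (Fin D) (Fin D) ℝ} (hC : Cᵀ = C) (u v : Fin D → ℝ) :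
    u ⬝ᵥ C *ᵥ v = v ⬝ᵥ C *ᵥ u := by
  rw [Matrix.dotProduct_mulVec, dotProduct_comm]
  congr 1
  conv_lhs => rw [← hC]
  rw [Matrix.vecMul_transpose]

lemma posdef_transpose_eq {C : Matrix (Fin D) (Fin D) ℝ} (hC : C.PosDef) : Cᵀ = C := by
  exact (Matrix.conjTranspose_eq_transpose_of_trivial C).symm.trans hC.1

/-- Expansion of the quadratic form on `a • y - b • x`. -/
lemma bz_expand {C : Matrix (Fin D) (Fin D) ℝ} (hCs : Cᵀ = C) (x y : Fin D → ℝ) :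
    ((x ⬝ᵥ C *ᵥ x) • y - (x ⬝ᵥ C *ᵥ y) • x) ⬝ᵥ C *ᵥ
        ((x ⬝ᵥ C *ᵥ x) • y - (x ⬝ᵥ C *ᵥ y) • x) =
      (x ⬝ᵥ C *ᵥ x) * ((x ⬝ᵥ C *ᵥ x) * (y ⬝ᵥ C *ᵥ y) - (x ⬝ᵥ C *ᵥ y) ^ 2) := by
  have hyx : y ⬝ᵥ C *ᵥ x = x ⬝ᵥ C *ᵥ y := symm_bilin hCs y x
  simp only [Matrix.mulVec_sub, Matrix.mulVec_smul, dotProduct_sub,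
    sub_dotProduct, dotProduct_smul, smul_dotProduct, smul_eq_mul]
  rw [hyx]
  ring

/-- Cauchy–Schwarz for the bilinear form of a positive definite matrix. -/
lemma cs_le {C : Matrix (Fin D) (Fin D) ℝ} (hC : C.PosDef) (x y : Fin D → ℝ) :
    (x ⬝ᵥ C *ᵥ y) ^ 2 ≤ (x ⬝ᵥ C *ᵥ x) * (y ⬝ᵥ C *ᵥ y) := by
  by_cases hx : x = 0
  · simp [hx]
  · have ha : 0 < x ⬝ᵥ C *ᵥ x := posdef_quad_pos hC hx
    have hz : 0 ≤ ((x ⬝ᵥ C *ᵥ x) • y - (x ⬝ᵥ C *ᵥ y) • x) ⬝ᵥ C *ᵥ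
        ((x ⬝ᵥ C *ᵥ x) • y - (x ⬝ᵥ C *ᵥ y) • x) := by
      by_cases hzz : ((x ⬝ᵥ C *ᵥ x) • y - (x ⬝ᵥ C *ᵥ y) • x) = 0
      · simp [hzz]
      · exact (posdef_quad_pos hC hzz).le
    rw [bz_expand (posdef_transpose_eq hC)] at hz
    nlinarith

/-- Equality case of Cauchy–Schwarz: the vectors are proportional. -/
lemma cs_eq {C : Matrix (Fin D) (Fin D) ℝ} (hC : C.PosDef) {x y : Fin D → ℝ} (hx : x ≠ 0)
    (heq : (x ⬝ᵥ C *ᵥ y) ^ 2 = (x ⬝ᵥ C *ᵥ x) * (y ⬝ᵥ C *ᵥ y)) :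
    ∃ r : ℝ, y = r • x := by
  have ha : 0 < x ⬝ᵥ C *ᵥ x := posdef_quad_pos hC hx
  have hz0 : ((x ⬝ᵥ C *ᵥ x) • y - (x ⬝ᵥ C *ᵥ y) • x) ⬝ᵥ C *ᵥ
      ((x ⬝ᵥ C *ᵥ x) • y - (x ⬝ᵥ C *ᵥ y) • x) = 0 := by
    rw [bz_expand (posdef_transpose_eq hC), ← heq]
    ring
  have hzz : (x ⬝ᵥ C *ᵥ x) • y - (x ⬝ᵥ C *ᵥ y) • x = 0 := by
    by_contra h
    exact (posdef_quad_pos hC h).ne' hz0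
  refine ⟨(x ⬝ᵥ C *ᵥ y) / (x ⬝ᵥ C *ᵥ x), ?_⟩
  have hay : (x ⬝ᵥ C *ᵥ x) • y = (x ⬝ᵥ C *ᵥ y) • x := sub_eq_zero.mp hzz
  have := congrArg (fun v => (x ⬝ᵥ C *ᵥ x)⁻¹ • v) hay
  simpa [smul_smul, inv_mul_cancel₀ ha.ne', div_eq_inv_mul] using this

/-- A matrix all of whose nonzero vectors are eigenvectors is scalar. -/
lemma eigen_scalar (hD : 0 < D) (M : Matrix (Fin D) (Fin D) ℝ)
    (h : ∀ s : Fin D → ℝ, s ≠ 0 → ∃ r : ℝ, M *ᵥ s = r • s) :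
    ∃ c : ℝ, M = c • (1 : Matrix (Fin D) (Fin D) ℝ) := by
  classical
  have hsingle : ∀ i : Fin D, (Pi.single i 1 : Fin D → ℝ) ≠ 0 := by
    intro i hi
    have := congrFun hi i
    simp at this
  choose r hr using fun i => h (Pi.single i 1) (hsingle i)
  have hdiag : ∀ i j : Fin D, M i j = if i = j then r j else 0 := by
    intro i j
    have := congrFun (hr j) i
    simpa [Pi.single_apply, eq_comm] using this
  have hreq : ∀ i j : Fin D, r i = r j := by
    intro i j
    rcases eq_or_ne i j with rfl | hij
    · rfl
    · have hs : (Pi.single i 1 + Pi.single j 1 : Fin D → ℝ) ≠ 0 := by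
        intro hsz
        have := congrFun hsz i
        simp [Pi.single_apply, hij.symm] at this
      obtain ⟨r', hr'⟩ := h _ hs
      have h1 := congrFun hr' i
      have h2 := congrFun hr' j
      rw [Matrix.mulVec_add, hr i, hr j] at h1 h2
      simp [Pi.single_apply, hij, hij.symm] at h1 h2
      rw [h1, h2]
  refine ⟨r ⟨0, hD⟩, ?_⟩
  ext i j
  rw [hdiag i j, hreq j ⟨0, hD⟩]
  by_cases hij : i = j <;> simp [hij, Matrix.one_apply]

end Aux


/-- The worst-case NSNR satisfies `NSNR_min(C, Ĉ) ≤ 1`, with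
equality if and only if `C = α Ĉ` for some real `α > 0`. -/
theorem nsnrMin_le_one_iff {D : ℕ} (hD : 0 < D)
    (C Ch : Matrix (Fin D) (Fin D) ℝ) (hC : C.PosDef) (hCh : Ch.PosDef) :
    NSNRmin C Ch ≤ 1 ∧ (NSNRmin C Ch = 1 ↔ ∃ α : ℝ, 0 < α ∧ C = α • Ch) := by
  classical
  have hCdet : IsUnit C.det := hC.det_pos.ne'.isUnit
  have hChdet : IsUnit Ch.det := hCh.det_pos.ne'.isUnit
  have hCC : C * C⁻¹ = 1 := Matrix.mul_nonsing_inv C hCdet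
  have hCC' : C⁻¹ * C = 1 := Matrix.nonsing_inv_mul C hCdet
  have hChCh : Ch * Ch⁻¹ = 1 := Matrix.mul_nonsing_inv Ch hChdet
  have hChCh' : Ch⁻¹ * Ch = 1 := Matrix.nonsing_inv_mul Ch hChdet
  have hChsymm : (Ch⁻¹)ᵀ = Ch⁻¹ := posdef_transpose_eq hCh.inv
  -- rewriting NSNR in terms of the C-bilinear form of x := Ch⁻¹ s, y := C⁻¹ s
  have key : ∀ s : Fin D → ℝ, NSNR C Ch s =
      ((Ch⁻¹ *ᵥ s) ⬝ᵥ C *ᵥ (C⁻¹ *ᵥ s)) ^ 2 /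
        (((Ch⁻¹ *ᵥ s) ⬝ᵥ C *ᵥ (Ch⁻¹ *ᵥ s)) * ((C⁻¹ *ᵥ s) ⬝ᵥ C *ᵥ (C⁻¹ *ᵥ s))) := by
    intro s
    have hdot : ∀ w : Fin D → ℝ, s ⬝ᵥ Ch⁻¹ *ᵥ w = (Ch⁻¹ *ᵥ s) ⬝ᵥ w := by
      intro w
      rw [Matrix.dotProduct_mulVec]
      congr 1
      conv_lhs => rw [← hChsymm]
      rw [Matrix.vecMul_transpose]
    have h1 : (Ch⁻¹ *ᵥ s) ⬝ᵥ C *ᵥ (C⁻¹ *ᵥ s) = s ⬝ᵥ Ch⁻¹ *ᵥ s := by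
      rw [Matrix.mulVec_mulVec, hCC, Matrix.one_mulVec, dotProduct_comm]
    have h2 : (Ch⁻¹ *ᵥ s) ⬝ᵥ C *ᵥ (Ch⁻¹ *ᵥ s) = s ⬝ᵥ (Ch⁻¹ * C * Ch⁻¹) *ᵥ s := by
      rw [show (Ch⁻¹ * C * Ch⁻¹) *ᵥ s = Ch⁻¹ *ᵥ (C *ᵥ (Ch⁻¹ *ᵥ s)) by
        rw [Matrix.mulVec_mulVec, Matrix.mulVec_mulVec, Matrix.mul_assoc], hdot]
    have h3 : (C⁻¹ *ᵥ s) ⬝ᵥ C *ᵥ (C⁻¹ *ᵥ s) = s ⬝ᵥ C⁻¹ *ᵥ s := by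
      rw [Matrix.mulVec_mulVec, hCC, Matrix.one_mulVec, dotProduct_comm]
    rw [NSNR, h1, h2, h3]
  have hxne : ∀ s : Fin D → ℝ, s ≠ 0 → Ch⁻¹ *ᵥ s ≠ 0 := by
    intro s hs h0
    apply hs
    have h : Ch *ᵥ (Ch⁻¹ *ᵥ s) = s := by
      rw [Matrix.mulVec_mulVec, hChCh, Matrix.one_mulVec]
    rw [h0, Matrix.mulVec_zero] at h
    exact h.symm
  have hyne : ∀ s : Fin D → ℝ, s ≠ 0 → C⁻¹ *ᵥ s ≠ 0 := by
    intro s hs h0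
    apply hs
    have h : C *ᵥ (C⁻¹ *ᵥ s) = s := by
      rw [Matrix.mulVec_mulVec, hCC, Matrix.one_mulVec]
    rw [h0, Matrix.mulVec_zero] at h
    exact h.symm
  have hdenom : ∀ s : Fin D → ℝ, s ≠ 0 →
      0 < ((Ch⁻¹ *ᵥ s) ⬝ᵥ C *ᵥ (Ch⁻¹ *ᵥ s)) * ((C⁻¹ *ᵥ s) ⬝ᵥ C *ᵥ (C⁻¹ *ᵥ s)) :=
    fun s hs => mul_pos (posdef_quad_pos hC (hxne s hs)) (posdef_quad_pos hC (hyne s hs))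
  have hle1 : ∀ s : Fin D → ℝ, s ≠ 0 → NSNR C Ch s ≤ 1 := by
    intro s hs
    rw [key s, div_le_one (hdenom s hs)]
    exact cs_le hC _ _
  have hnonneg : ∀ s : Fin D → ℝ, s ≠ 0 → 0 ≤ NSNR C Ch s := by
    intro s hs
    rw [key s]
    exact div_nonneg (sq_nonneg _) (hdenom s hs).le
  have i0 : Fin D := ⟨0, hD⟩
  have hs0 : (Pi.single i0 1 : Fin D → ℝ) ≠ 0 := by
    intro h
    have := congrFun h i0
    simp at this
  haveI : Nonempty {s : Fin D → ℝ // s ≠ 0} := ⟨⟨Pi.single i0 1, hs0⟩⟩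
  have hbdd : BddBelow (Set.range fun s : {s : Fin D → ℝ // s ≠ 0} => NSNR C Ch s.1) := by
    refine ⟨0, ?_⟩
    rintro x ⟨s, rfl⟩
    exact hnonneg s.1 s.2
  have hmin_le : ∀ s : Fin D → ℝ, s ≠ 0 → NSNRmin C Ch ≤ NSNR C Ch s :=
    fun s hs => ciInf_le hbdd ⟨s, hs⟩
  have part1 : NSNRmin C Ch ≤ 1 := le_trans (hmin_le _ hs0) (hle1 _ hs0)
  refine ⟨part1, ?_, ?_⟩
  · -- forward direction
    intro h1
    have hall : ∀ s : Fin D → ℝ, s ≠ 0 → NSNR C Ch s = 1 :=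
      fun s hs => le_antisymm (hle1 s hs) (h1 ▸ hmin_le s hs)
    have heig : ∀ s : Fin D → ℝ, s ≠ 0 → ∃ r : ℝ, (Ch * C⁻¹) *ᵥ s = r • s := by
      intro s hs
      have hkey := hall s hs
      rw [key s] at hkey
      have heq : ((Ch⁻¹ *ᵥ s) ⬝ᵥ C *ᵥ (C⁻¹ *ᵥ s)) ^ 2 =
          ((Ch⁻¹ *ᵥ s) ⬝ᵥ C *ᵥ (Ch⁻¹ *ᵥ s)) * ((C⁻¹ *ᵥ s) ⬝ᵥ C *ᵥ (C⁻¹ *ᵥ s)) :=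
        (div_eq_one_iff_eq (hdenom s hs).ne').mp hkey
      obtain ⟨r, hr⟩ := cs_eq hC (hxne s hs) heq
      refine ⟨r, ?_⟩
      have h : Ch *ᵥ (C⁻¹ *ᵥ s) = Ch *ᵥ (r • (Ch⁻¹ *ᵥ s)) := by rw [hr]
      rw [Matrix.mulVec_smul, Matrix.mulVec_mulVec, Matrix.mulVec_mulVec, hChCh,
        Matrix.one_mulVec] at h
      exact h
    obtain ⟨c, hc⟩ := eigen_scalar hD (Ch * C⁻¹) heig
    have hChC : Ch = c • C := by
      have h := congrArg (· * C) hc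
      simpa [Matrix.mul_assoc, hCC', Matrix.smul_mul, Matrix.one_mul] using h
    have hcpos : 0 < c := by
      have h1' := posdef_quad_pos hCh hs0
      have h2' := posdef_quad_pos hC hs0
      rw [hChC, Matrix.smul_mulVec, dotProduct_smul, smul_eq_mul] at h1'
      nlinarith
    refine ⟨c⁻¹, inv_pos.mpr hcpos, ?_⟩
    rw [hChC, smul_smul, inv_mul_cancel₀ hcpos.ne', one_smul]
  · -- backward direction
    rintro ⟨α, hα, rfl⟩
    have hallone : ∀ s : {s : Fin D → ℝ // s ≠ 0}, NSNR (α • Ch) Ch s.1 = 1 := by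
      rintro ⟨s, hs⟩
      have hq : 0 < s ⬝ᵥ Ch⁻¹ *ᵥ s := posdef_quad_pos hCh.inv hs
      have hmid : Ch⁻¹ * (α • Ch) * Ch⁻¹ = α • Ch⁻¹ := by
        rw [Matrix.mul_smul, Matrix.smul_mul, hChCh', Matrix.one_mul]
      letI : Invertible α := invertibleOfNonzero hα.ne'
      have hinv : (α • Ch)⁻¹ = α⁻¹ • Ch⁻¹ := by
        rw [Matrix.inv_smul (A := Ch) α hChdet, invOf_eq_inv α]
      show (s ⬝ᵥ Ch⁻¹ *ᵥ s) ^ 2 /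
          ((s ⬝ᵥ (Ch⁻¹ * (α • Ch) * Ch⁻¹) *ᵥ s) * (s ⬝ᵥ (α • Ch)⁻¹ *ᵥ s)) = 1
      rw [hmid, hinv, Matrix.smul_mulVec, Matrix.smul_mulVec,
        dotProduct_smul, dotProduct_smul, smul_eq_mul, smul_eq_mul]
      rw [show α * (s ⬝ᵥ Ch⁻¹ *ᵥ s) * (α⁻¹ * (s ⬝ᵥ Ch⁻¹ *ᵥ s)) = (s ⬝ᵥ Ch⁻¹ *ᵥ s) ^ 2 by
        field_simp]
      exact div_self (by positivity)
    rw [NSNRmin, iInf_congr hallone, ciInf_const]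
end

section
/- Theorem (KL bounds the NSNR distance): d_NSNR(C, Ĉ) ≤ d_KL(C, Ĉ), where d_NSNR(C, Ĉ) = −½ log NSNR_min(C, Ĉ) and d_KL(C, Ĉ) = ½(Tr(C Ĉ⁻¹) − D − log det(C Ĉ⁻¹)). -/
open Matrix

section NSNRAuxiliary

open Finset

variable {D : ℕ}

lemma NSNRAux_quadDiag (U : Matrix (Fin D) (Fin D) ℝ) (d v : Fin D → ℝ) :
    v ⬝ᵥ (U * diagonal d * Uᵀ) *ᵥ v = ∑ i, d i * ((Uᵀ *ᵥ v) i) ^ 2 := by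
  rw [← mulVec_mulVec, ← mulVec_mulVec, dotProduct_mulVec, ← mulVec_transpose]
  simp [dotProduct, mulVec_diagonal]
  exact Finset.sum_congr rfl fun i _ => by ring

lemma NSNRAux_quadNorm (U : Matrix (Fin D) (Fin D) ℝ) (hU : U * Uᵀ = 1) (v : Fin D → ℝ) :
    ∑ i, ((Uᵀ *ᵥ v) i) ^ 2 = v ⬝ᵥ v := by
  have h := NSNRAux_quadDiag U (fun _ => 1) v
  simp only [diagonal_one, Matrix.mul_one, Matrix.one_mul] at h
  rw [hU] at h
  simpa using h.symm

lemma NSNRAux_symmQuad (W M : Matrix (Fin D) (Fin D) ℝ) (hW : Wᵀ = W) (s : Fin D → ℝ) :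
    s ⬝ᵥ (W * M * W) *ᵥ s = (W *ᵥ s) ⬝ᵥ M *ᵥ (W *ᵥ s) := by
  rw [← mulVec_mulVec, ← mulVec_mulVec, dotProduct_mulVec, ← mulVec_transpose, hW]

lemma NSNRAux_star_vec (v : Fin D → ℝ) : star v = v := funext fun i => star_trivial _

/-- Spectral package for a real hermitian matrix. -/
lemma NSNRAux_spectral_pack (X : Matrix (Fin D) (Fin D) ℝ) (hX : X.IsHermitian) :
    ∃ U : Matrix (Fin D) (Fin D) ℝ, U * Uᵀ = 1 ∧ Uᵀ * U = 1 ∧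
      X = U * diagonal hX.eigenvalues * Uᵀ := by
  refine ⟨(hX.eigenvectorUnitary : Matrix (Fin D) (Fin D) ℝ), ?_, ?_, ?_⟩
  · have h := (Matrix.mem_unitaryGroup_iff).mp (hX.eigenvectorUnitary).2
    rwa [Matrix.star_eq_conjTranspose, conjTranspose_eq_transpose_of_trivial] at h
  · have h := (Matrix.mem_unitaryGroup_iff').mp (hX.eigenvectorUnitary).2
    rwa [Matrix.star_eq_conjTranspose, conjTranspose_eq_transpose_of_trivial] at h
  · have h := hX.spectral_theorem
    rwa [Unitary.conjStarAlgAut_apply, Matrix.star_eq_conjTranspose, conjTranspose_eq_transpose_of_trivial,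
      RCLike.ofReal_real_eq_id, Function.id_comp] at h

/-- Kantorovich-type inequality for quadratic forms. -/
lemma NSNRAux_kantorovich (X : Matrix (Fin D) (Fin D) ℝ)
    (U : Matrix (Fin D) (Fin D) ℝ) (hU1 : U * Uᵀ = 1) (hU2 : Uᵀ * U = 1)
    (lam : Fin D → ℝ) (hl : ∀ i, 0 < lam i)
    (hXeq : X = U * diagonal lam * Uᵀ)
    (m M : ℝ) (hm0 : 0 < m) (hM0 : 0 < M) (hm : ∀ i, m ≤ lam i) (hM : ∀ i, lam i ≤ M)
    (v : Fin D → ℝ) :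
    (v ⬝ᵥ X *ᵥ v) * (v ⬝ᵥ X⁻¹ *ᵥ v) * (4 * m * M) ≤ (m + M) ^ 2 * (v ⬝ᵥ v) ^ 2 := by
  have hXinv : X⁻¹ = U * diagonal (fun i => (lam i)⁻¹) * Uᵀ := by
    apply inv_eq_right_inv
    rw [hXeq]
    calc U * diagonal lam * Uᵀ * (U * diagonal (fun i => (lam i)⁻¹) * Uᵀ)
        = U * (diagonal lam * (Uᵀ * U) * diagonal (fun i => (lam i)⁻¹)) * Uᵀ := by
          simp only [Matrix.mul_assoc]
      _ = U * (diagonal lam * diagonal (fun i => (lam i)⁻¹)) * Uᵀ := by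
          rw [hU2, Matrix.mul_one]
      _ = 1 := by
          rw [diagonal_mul_diagonal]
          have : (fun i => lam i * (lam i)⁻¹) = fun _ => (1:ℝ) := by
            funext i; exact mul_inv_cancel₀ (hl i).ne'
          rw [this, diagonal_one, Matrix.mul_one, hU1]
  set w : Fin D → ℝ := Uᵀ *ᵥ v with hw
  have hPe : v ⬝ᵥ X *ᵥ v = ∑ i, lam i * (w i) ^ 2 := by
    rw [hXeq]; exact NSNRAux_quadDiag U lam v
  have hQe : v ⬝ᵥ X⁻¹ *ᵥ v = ∑ i, (lam i)⁻¹ * (w i) ^ 2 := by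
    rw [hXinv]; exact NSNRAux_quadDiag U _ v
  have hNe : v ⬝ᵥ v = ∑ i, (w i) ^ 2 := (NSNRAux_quadNorm U hU1 v).symm
  rw [hPe, hQe, hNe]
  set P := ∑ i, lam i * (w i) ^ 2 with hP
  set Q := ∑ i, (lam i)⁻¹ * (w i) ^ 2 with hQ
  set N := ∑ i, (w i) ^ 2 with hN
  have key : P + (m * M) * Q ≤ (m + M) * N := by
    rw [hP, hQ, hN, Finset.mul_sum, Finset.mul_sum, ← Finset.sum_add_distrib]
    apply Finset.sum_le_sum
    intro i _
    have h1 : 0 ≤ (lam i - m) * (M - lam i) :=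
      mul_nonneg (by linarith [hm i]) (by linarith [hM i])
    have h2 : lam i * (lam i)⁻¹ = 1 := mul_inv_cancel₀ (hl i).ne'
    have h3 : lam i + m * M * (lam i)⁻¹ ≤ m + M := by
      have h4 : 0 ≤ (lam i - m) * (M - lam i) * (lam i)⁻¹ :=
        mul_nonneg h1 (inv_pos.2 (hl i)).le
      have e : (lam i - m) * (M - lam i) * (lam i)⁻¹
          = m + M - lam i - m * M * (lam i)⁻¹ := by
        have expand : (lam i - m) * (M - lam i) * (lam i)⁻¹
            = (lam i * (lam i)⁻¹) * (m + M - lam i) - m * M * (lam i)⁻¹ := by ring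
        rw [expand, h2]; ring
      linarith [e ▸ h4]
    nlinarith [mul_le_mul_of_nonneg_right h3 (sq_nonneg (w i))]
  have hPn : 0 ≤ P := Finset.sum_nonneg fun i _ => mul_nonneg (hl i).le (sq_nonneg _)
  have hQn : 0 ≤ Q := Finset.sum_nonneg fun i _ =>
    mul_nonneg (inv_pos.2 (hl i)).le (sq_nonneg _)
  have hNn : 0 ≤ N := Finset.sum_nonneg fun i _ => sq_nonneg _
  have h4 : 0 ≤ P + m * M * Q := by positivity
  have h5 : (P + m * M * Q) ^ 2 ≤ ((m + M) * N) ^ 2 := by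
    apply pow_le_pow_left₀ h4 key 2
  nlinarith [h5, sq_nonneg (P - m * M * Q)]

lemma NSNRAux_pairBound {m M : ℝ} (hm0 : 0 < m) (hM0 : 0 < M) :
    (1 + Real.log m - m) + (1 + Real.log M - M)
      ≤ Real.log (4 * m * M) - Real.log ((m + M) ^ 2) := by
  have ht : (0:ℝ) < m + M := by linarith
  have h1 : Real.log (4 * m * M) = Real.log 4 + Real.log m + Real.log M := by
    rw [Real.log_mul (by positivity) hM0.ne', Real.log_mul (by norm_num) hm0.ne']
  have h2 : Real.log ((m + M) ^ 2) = 2 * Real.log (m + M) := by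
    rw [Real.log_pow]; push_cast; ring
  have h3 : Real.log (m + M) = Real.log 2 + Real.log ((m + M) / 2) := by
    rw [← Real.log_mul (by norm_num) (by positivity : ((m + M) / 2 : ℝ) ≠ 0)]
    ring_nf
  have h4 : Real.log ((m + M) / 2) ≤ (m + M) / 2 - 1 :=
    Real.log_le_sub_one_of_pos (by positivity)
  have h5 : Real.log 4 = 2 * Real.log 2 := by
    rw [show (4:ℝ) = 2 ^ 2 by norm_num, Real.log_pow]; push_cast; ring
  rw [h1, h2, h3, h5]
  linarith

lemma NSNRAux_scalarIneq (lam : Fin D → ℝ) (hl : ∀ i, 0 < lam i)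
    (m M : ℝ) (hm0 : 0 < m) (hM0 : 0 < M)
    (hmem : ∃ i, lam i = m) (hMem : ∃ i, lam i = M) :
    ∑ i, (1 + Real.log (lam i) - lam i)
      ≤ Real.log (4 * m * M) - Real.log ((m + M) ^ 2) := by
  have hg : ∀ i, 1 + Real.log (lam i) - lam i ≤ 0 := fun i => by
    have := Real.log_le_sub_one_of_pos (hl i); linarith
  by_cases hEq : m = M
  · have hrhs : Real.log (4 * m * M) - Real.log ((m + M) ^ 2) = 0 := by
      rw [hEq, show (M + M) ^ 2 = 4 * M * M by ring, sub_self]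
    rw [hrhs]
    exact Finset.sum_nonpos fun i _ => hg i
  · obtain ⟨i0, hi0⟩ := hmem
    obtain ⟨i1, hi1⟩ := hMem
    have hne : i0 ≠ i1 := fun h => hEq (by rw [← hi0, h, hi1])
    have hsub : ({i0, i1} : Finset (Fin D)) ⊆ univ := subset_univ _
    have hsplit := Finset.sum_sdiff (f := fun i => 1 + Real.log (lam i) - lam i) hsub
    have hpair : ∑ i ∈ ({i0, i1} : Finset (Fin D)), (1 + Real.log (lam i) - lam i)
        = (1 + Real.log m - m) + (1 + Real.log M - M) := by
      rw [Finset.sum_pair hne, hi0, hi1]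
    have hrest : ∑ i ∈ univ \ ({i0, i1} : Finset (Fin D)),
        (1 + Real.log (lam i) - lam i) ≤ 0 :=
      Finset.sum_nonpos fun i _ => hg i
    have := NSNRAux_pairBound hm0 hM0
    linarith [hsplit, hpair, hrest, this]

end NSNRAuxiliary

/-- The NSNR distance `d_NSNR(C, Ĉ) = -½ log NSNR_min(C, Ĉ)`. -/
noncomputable def dNSNR {D : ℕ} (C Ch : Matrix (Fin D) (Fin D) ℝ) : ℝ :=
  -(1 / 2) * Real.log (NSNRmin C Ch)

/-- The Gaussian KL divergence `d_KL(C, Ĉ) = ½(Tr(C Ĉ⁻¹) − D − log det(C Ĉ⁻¹))`. -/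
noncomputable def dKL {D : ℕ} (C Ch : Matrix (Fin D) (Fin D) ℝ) : ℝ :=
  (1 / 2) * ((C * Ch⁻¹).trace - D - Real.log (C * Ch⁻¹).det)

/-- **KL bounds the NSNR distance.**
`d_NSNR(C, Ĉ) ≤ d_KL(C, Ĉ)`. -/
theorem dNSNR_le_dKL {D : ℕ} (hD : 0 < D)
    (C Ch : Matrix (Fin D) (Fin D) ℝ) (hC : C.PosDef) (hCh : Ch.PosDef) :
    dNSNR C Ch ≤ dKL C Ch := by
  classical
  have hChInv : (Ch⁻¹).PosDef := hCh.inv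
  open scoped MatrixOrder in set W : Matrix (Fin D) (Fin D) ℝ := CFC.sqrt (Ch⁻¹) with hWdef
  have hWpsd : W.PosSemidef := by open scoped MatrixOrder in exact (CFC.sqrt_nonneg (Ch⁻¹)).posSemidef
  have hWsymm : Wᵀ = W := by
    have h := hWpsd.1
    rwa [Matrix.IsHermitian, conjTranspose_eq_transpose_of_trivial] at h
  have hCsymm : Cᵀ = C := by
    have h := hC.1
    rwa [Matrix.IsHermitian, conjTranspose_eq_transpose_of_trivial] at h
  have hWW : W * W = Ch⁻¹ := by open scoped MatrixOrder in exact CFC.sqrt_mul_sqrt_self _ hChInv.posSemidef.nonneg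
  have hdetW : IsUnit W.det := by
    have h := hChInv.det_pos
    rw [← hWW, det_mul] at h
    exact isUnit_iff_ne_zero.2 (fun h0 => by rw [h0] at h; simpa using h)
  have hWl : W⁻¹ * W = 1 := nonsing_inv_mul W hdetW
  have hWr : W * W⁻¹ = 1 := mul_nonsing_inv W hdetW
  have hWinj : ∀ x : Fin D → ℝ, W *ᵥ x = 0 → x = 0 := by
    intro x h
    have h2 := congrArg (fun y => W⁻¹ *ᵥ y) h
    simp only [mulVec_mulVec, hWl, one_mulVec, mulVec_zero] at h2
    exact h2
  set X := W * C * W with hXdef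
  have hXpd : X.PosDef := by
    refine Matrix.PosDef.of_dotProduct_mulVec_pos ?_ ?_
    · show Xᴴ = X
      rw [conjTranspose_eq_transpose_of_trivial, hXdef]
      rw [transpose_mul, transpose_mul, hWsymm, hCsymm, Matrix.mul_assoc]
    · intro x hx
      rw [NSNRAux_star_vec, hXdef, NSNRAux_symmQuad W C hWsymm x]
      have hvx : W *ᵥ x ≠ 0 := fun h => hx (hWinj x h)
      have := hC.dotProduct_mulVec_pos hvx
      rwa [NSNRAux_star_vec] at this
  have hXH : X.IsHermitian := hXpd.1
  set lam := hXH.eigenvalues with hlamdef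
  have hlpos : ∀ i, 0 < lam i := fun i => hXpd.eigenvalues_pos i
  obtain ⟨U, hU1, hU2, hXeq⟩ := NSNRAux_spectral_pack X hXH
  have hne : (Finset.univ : Finset (Fin D)).Nonempty := ⟨⟨0, hD⟩, Finset.mem_univ _⟩
  set m := Finset.univ.inf' hne lam with hmdef
  set M := Finset.univ.sup' hne lam with hMdef
  have hm : ∀ i, m ≤ lam i := fun i => Finset.inf'_le _ (Finset.mem_univ i)
  have hM : ∀ i, lam i ≤ M := fun i => Finset.le_sup' _ (Finset.mem_univ i)
  have hmem : ∃ i, lam i = m := by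
    obtain ⟨i, _, h⟩ := Finset.exists_mem_eq_inf' hne lam
    exact ⟨i, h.symm⟩
  have hMem : ∃ i, lam i = M := by
    obtain ⟨i, _, h⟩ := Finset.exists_mem_eq_sup' hne lam
    exact ⟨i, h.symm⟩
  have hm0 : 0 < m := by obtain ⟨i, h⟩ := hmem; rw [← h]; exact hlpos i
  have hM0 : 0 < M := by obtain ⟨i, h⟩ := hMem; rw [← h]; exact hlpos i
  set K := 4 * m * M / (m + M) ^ 2 with hKdef
  have hK0 : 0 < K := by
    apply div_pos
    · nlinarith
    · positivity
  -- Step 1: pointwise Kantorovich bound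
  have step1 : ∀ s : Fin D → ℝ, s ≠ 0 → K ≤ NSNR C Ch s := by
    intro s hs
    set v := W *ᵥ s with hv
    have hvne : v ≠ 0 := fun h => hs (hWinj s h)
    have hq1 : s ⬝ᵥ Ch⁻¹ *ᵥ s = v ⬝ᵥ v := by
      rw [← hWW, show W * W = W * 1 * W by rw [Matrix.mul_one],
        NSNRAux_symmQuad W 1 hWsymm s, one_mulVec]
    have hq2 : s ⬝ᵥ (Ch⁻¹ * C * Ch⁻¹) *ᵥ s = v ⬝ᵥ X *ᵥ v := by
      rw [← hWW, show W * W * C * (W * W) = W * X * W by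
        rw [hXdef]; simp only [Matrix.mul_assoc],
        NSNRAux_symmQuad W X hWsymm s]
    have hCinv : C⁻¹ = W * X⁻¹ * W := by
      rw [hXdef, Matrix.mul_inv_rev, Matrix.mul_inv_rev]
      rw [← Matrix.mul_assoc W W⁻¹, hWr, Matrix.one_mul, Matrix.mul_assoc, hWl,
        Matrix.mul_one]
    have hq3 : s ⬝ᵥ C⁻¹ *ᵥ s = v ⬝ᵥ X⁻¹ *ᵥ v := by
      rw [hCinv, NSNRAux_symmQuad W X⁻¹ hWsymm s]
    have hPpos : 0 < v ⬝ᵥ X *ᵥ v := by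
      have := hXpd.dotProduct_mulVec_pos hvne; rwa [NSNRAux_star_vec] at this
    have hQpos : 0 < v ⬝ᵥ X⁻¹ *ᵥ v := by
      have := hXpd.inv.dotProduct_mulVec_pos hvne; rwa [NSNRAux_star_vec] at this
    have hkant := NSNRAux_kantorovich X U hU1 hU2 lam hlpos hXeq m M hm0 hM0 hm hM v
    rw [NSNR, hq1, hq2, hq3, hKdef]
    rw [div_le_div_iff₀ (by positivity) (mul_pos hPpos hQpos)]
    nlinarith [hkant]
  -- Step 2: infimum bound
  have hnonempty : Nonempty {s : Fin D → ℝ // s ≠ 0} := by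
    refine ⟨⟨fun _ => 1, ?_⟩⟩
    intro h
    have := congrFun h ⟨0, hD⟩
    simpa using this
  have step2 : K ≤ NSNRmin C Ch := by
    rw [NSNRmin]
    exact le_ciInf fun s => step1 s.1 s.2
  -- Trace and determinant identities
  have htr : (C * Ch⁻¹).trace = ∑ i, lam i := by
    have h1 : (C * Ch⁻¹).trace = X.trace := by
      rw [hXdef, ← hWW, ← Matrix.mul_assoc, Matrix.trace_mul_cycle]
    have h2 : X.trace = ∑ i, lam i := by
      rw [hXeq, Matrix.trace_mul_cycle, hU2, Matrix.one_mul, Matrix.trace_diagonal]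
    rw [h1, h2]
  have hdet : (C * Ch⁻¹).det = ∏ i, lam i := by
    have h1 : (C * Ch⁻¹).det = X.det := by
      rw [hXdef, ← hWW, det_mul, det_mul, det_mul, det_mul]; ring
    have hdetU : U.det * Uᵀ.det = 1 := by rw [← det_mul, hU1, det_one]
    have h2 : X.det = ∏ i, lam i := by
      rw [hXeq, det_mul, det_mul, det_diagonal]
      linear_combination (∏ i, lam i) * hdetU
    rw [h1, h2]
  have hlogdet : Real.log (C * Ch⁻¹).det = ∑ i, Real.log (lam i) := by
    rw [hdet, Real.log_prod fun i _ => (hlpos i).ne']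
  have hsc := NSNRAux_scalarIneq lam hlpos m M hm0 hM0 hmem hMem
  have hlogK : Real.log K = Real.log (4 * m * M) - Real.log ((m + M) ^ 2) := by
    rw [hKdef, Real.log_div (by positivity) (by positivity)]
  have hsum : ∑ i, (1 + Real.log (lam i) - lam i)
      = D + ∑ i, Real.log (lam i) - ∑ i, lam i := by
    rw [Finset.sum_sub_distrib, Finset.sum_add_distrib, Finset.sum_const,
      Finset.card_univ, Fintype.card_fin]
    simp [nsmul_eq_mul]
  have hlogmin : Real.log K ≤ Real.log (NSNRmin C Ch) := Real.log_le_log hK0 step2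
  rw [dNSNR, dKL, htr, hlogdet]
  have hfin : -(Real.log K) ≤ (∑ i, lam i) - D - ∑ i, Real.log (lam i) := by
    rw [hlogK]; linarith [hsc, hsum]
  linarith [hlogmin, hfin]
end

section
/- Eigenvalue form of the KL bound: if q_1, …, q_D are positive reals with minimum q_min and maximum q_max, then log((q_min + q_max)²) − log(q_min q_max) − log 4 ≤ (Σ_{i=1}^{D} q_i) − D − Σ_{i=1}^{D} log q_i. -/
/-- **eigenvalue form of the KL bound.** If `q_1, …, q_D` are
positive reals with minimum `q_min` and maximum `q_max`, then
`log((q_min + q_max)²) − log(q_min q_max) − log 4 ≤ (Σ q_i) − D − Σ log q_i`. -/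
theorem kl_bound_eigenvalue_form {D : ℕ} (hD : 0 < D)
    (q : Fin D → ℝ) (hq : ∀ i, 0 < q i)
    (qmin qmax : ℝ) (hqmin : qmin = ⨅ i, q i) (hqmax : qmax = ⨆ i, q i) :
    Real.log ((qmin + qmax) ^ 2) - Real.log (qmin * qmax) - Real.log 4 ≤
      (∑ i, q i) - D - ∑ i, Real.log (q i) := by
  haveI : Nonempty (Fin D) := ⟨⟨0, hD⟩⟩
  obtain ⟨i0, hi0⟩ := Finite.exists_min q
  obtain ⟨j0, hj0⟩ := Finite.exists_max q
  have hmin : qmin = q i0 := by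
    rw [hqmin]
    exact le_antisymm (ciInf_le (Finite.bddBelow_range q) i0) (le_ciInf hi0)
  have hmax : qmax = q j0 := by
    rw [hqmax]
    exact le_antisymm (ciSup_le hj0) (le_ciSup (Finite.bddAbove_range q) j0)
  have ha : 0 < qmin := hmin ▸ hq i0
  have hb : 0 < qmax := hmax ▸ hq j0
  have hterm : ∀ i, 0 ≤ q i - 1 - Real.log (q i) := fun i => by
    have := Real.log_le_sub_one_of_pos (hq i)
    linarith
  have hRHS : (∑ i, q i) - D - ∑ i, Real.log (q i)
      = ∑ i, (q i - 1 - Real.log (q i)) := by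
    rw [Finset.sum_sub_distrib, Finset.sum_sub_distrib, Finset.sum_const,
      Finset.card_univ, Fintype.card_fin, nsmul_eq_mul, mul_one]
  rw [hRHS]
  -- key scalar inequality
  have key : Real.log ((qmin + qmax) ^ 2) - Real.log (qmin * qmax) - Real.log 4
      ≤ (qmin - 1 - Real.log qmin) + (qmax - 1 - Real.log qmax) := by
    have hs : 0 < qmin + qmax := by linarith
    have h1 : Real.log ((qmin + qmax) / 2) ≤ (qmin + qmax) / 2 - 1 :=
      Real.log_le_sub_one_of_pos (by linarith)
    have h2 : Real.log ((qmin + qmax) / 2) = Real.log (qmin + qmax) - Real.log 2 :=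
      Real.log_div (ne_of_gt hs) two_ne_zero
    have h3 : Real.log ((qmin + qmax) ^ 2) = 2 * Real.log (qmin + qmax) := by
      rw [Real.log_pow]; push_cast; ring
    have h4 : Real.log (qmin * qmax) = Real.log qmin + Real.log qmax :=
      Real.log_mul (ne_of_gt ha) (ne_of_gt hb)
    have h5 : Real.log 4 = 2 * Real.log 2 := by
      rw [show (4:ℝ) = 2 ^ 2 by norm_num, Real.log_pow]; push_cast; ring
    rw [h3, h4, h5]
    rw [h2] at h1
    linarith
  by_cases hab : i0 = j0
  · -- all equal case: qmin = qmax
    have heq : qmin = qmax := by rw [hmin, hmax, hab]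
    have hLHS : Real.log ((qmin + qmax) ^ 2) - Real.log (qmin * qmax) - Real.log 4 = 0 := by
      rw [← heq]
      have : (qmin + qmin) ^ 2 = 4 * (qmin * qmin) := by ring
      rw [this, Real.log_mul (by norm_num) (by positivity)]
      ring
    rw [hLHS]
    exact Finset.sum_nonneg fun i _ => hterm i
  · have hsub : ({i0, j0} : Finset (Fin D)) ⊆ Finset.univ := Finset.subset_univ _
    have hpair : ∑ i ∈ ({i0, j0} : Finset (Fin D)), (q i - 1 - Real.log (q i))
        = (qmin - 1 - Real.log qmin) + (qmax - 1 - Real.log qmax) := by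
      rw [Finset.sum_pair hab, hmin, hmax]
    calc Real.log ((qmin + qmax) ^ 2) - Real.log (qmin * qmax) - Real.log 4
        ≤ (qmin - 1 - Real.log qmin) + (qmax - 1 - Real.log qmax) := key
      _ = ∑ i ∈ ({i0, j0} : Finset (Fin D)), (q i - 1 - Real.log (q i)) := hpair.symm
      _ ≤ ∑ i, (q i - 1 - Real.log (q i)) :=
          Finset.sum_le_sum_of_subset_of_nonneg hsub fun i _ _ => hterm i
end

section
/- The NSNR distance is nonnegative: d_NSNR(C, Ĉ) ≥ 0, and d_NSNR(C, Ĉ) = 0 if and only if C = α Ĉ for some real α > 0. -/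
open Matrix

namespace NSNRAux

variable {D : ℕ} {C Ch : Matrix (Fin D) (Fin D) ℝ}

lemma quad_sym (hC : C.IsHermitian) (x y : Fin D → ℝ) :
    x ⬝ᵥ C *ᵥ y = y ⬝ᵥ C *ᵥ x := by
  rw [dotProduct_mulVec, ← mulVec_transpose, dotProduct_comm]
  congr 1
  rw [show Cᵀ = C from hC]

lemma pd_pos (hC : C.PosDef) {x : Fin D → ℝ} (hx : x ≠ 0) :
    0 < x ⬝ᵥ C *ᵥ x := by simpa using hC.dotProduct_mulVec_pos hx

lemma pd_nonneg (hC : C.PosDef) (x : Fin D → ℝ) :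
    0 ≤ x ⬝ᵥ C *ᵥ x := by simpa using hC.posSemidef.dotProduct_mulVec_nonneg x

lemma quad_expand (hC : C.IsHermitian) (x y : Fin D → ℝ) (t : ℝ) :
    (x - t • y) ⬝ᵥ C *ᵥ (x - t • y)
      = x ⬝ᵥ C *ᵥ x - 2 * t * (x ⬝ᵥ C *ᵥ y) + t ^ 2 * (y ⬝ᵥ C *ᵥ y) := by
  simp only [Matrix.mulVec_sub, Matrix.mulVec_smul, sub_dotProduct, dotProduct_sub,
    smul_dotProduct, dotProduct_smul, smul_eq_mul, quad_sym hC y x]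
  ring

lemma cs_le (hC : C.PosDef) (x y : Fin D → ℝ) :
    (x ⬝ᵥ C *ᵥ y) ^ 2 ≤ (x ⬝ᵥ C *ᵥ x) * (y ⬝ᵥ C *ᵥ y) := by
  by_cases hy : y = 0
  · simp [hy]
  · have byy := pd_pos hC hy
    set t : ℝ := (x ⬝ᵥ C *ᵥ y) / (y ⬝ᵥ C *ᵥ y) with ht
    have h0 : 0 ≤ (x - t • y) ⬝ᵥ C *ᵥ (x - t • y) := pd_nonneg hC _
    rw [quad_expand hC.1 x y t] at h0
    have htm : t * (y ⬝ᵥ C *ᵥ y) = x ⬝ᵥ C *ᵥ y := div_mul_cancel₀ _ byy.ne'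
    nlinarith [mul_nonneg h0 byy.le, sq_nonneg (x ⬝ᵥ C *ᵥ y)]

lemma cs_eq (hC : C.PosDef) (x y : Fin D → ℝ) (hy : y ≠ 0)
    (heq : (x ⬝ᵥ C *ᵥ y) ^ 2 = (x ⬝ᵥ C *ᵥ x) * (y ⬝ᵥ C *ᵥ y)) :
    x = ((x ⬝ᵥ C *ᵥ y) / (y ⬝ᵥ C *ᵥ y)) • y := by
  have byy := pd_pos hC hy
  set t : ℝ := (x ⬝ᵥ C *ᵥ y) / (y ⬝ᵥ C *ᵥ y) with ht
  have htm : t * (y ⬝ᵥ C *ᵥ y) = x ⬝ᵥ C *ᵥ y := div_mul_cancel₀ _ byy.ne'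
  have hz : (x - t • y) ⬝ᵥ C *ᵥ (x - t • y) = 0 := by
    rw [quad_expand hC.1 x y t]
    field_simp [ht]
    nlinarith [heq]
  by_contra hne
  have : x - t • y ≠ 0 := sub_ne_zero.mpr hne
  exact (pd_pos hC this).ne' hz

lemma NSNR_eq (hC : C.PosDef) (hCh : Ch.PosDef) (s : Fin D → ℝ) :
    NSNR C Ch s = ((Ch⁻¹ *ᵥ s) ⬝ᵥ C *ᵥ (C⁻¹ *ᵥ s)) ^ 2 /
      (((Ch⁻¹ *ᵥ s) ⬝ᵥ C *ᵥ (Ch⁻¹ *ᵥ s)) * ((C⁻¹ *ᵥ s) ⬝ᵥ C *ᵥ (C⁻¹ *ᵥ s))) := by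
  have hCu : C * C⁻¹ = 1 := mul_nonsing_inv C hC.det_pos.ne'.isUnit
  have h1 : (Ch⁻¹ *ᵥ s) ⬝ᵥ C *ᵥ (C⁻¹ *ᵥ s) = s ⬝ᵥ Ch⁻¹ *ᵥ s := by
    rw [mulVec_mulVec, hCu, one_mulVec, dotProduct_comm]
  have h2 : (C⁻¹ *ᵥ s) ⬝ᵥ C *ᵥ (C⁻¹ *ᵥ s) = s ⬝ᵥ C⁻¹ *ᵥ s := by
    rw [mulVec_mulVec, hCu, one_mulVec, dotProduct_comm]
  have h3 : (Ch⁻¹ *ᵥ s) ⬝ᵥ C *ᵥ (Ch⁻¹ *ᵥ s) = s ⬝ᵥ (Ch⁻¹ * C * Ch⁻¹) *ᵥ s := by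
    rw [Matrix.mul_assoc, ← mulVec_mulVec, quad_sym hCh.inv.1 s, ← mulVec_mulVec,
      quad_sym hC.1, dotProduct_comm]
  rw [NSNR, h1, h2, h3]

lemma mulVec_inv_ne (hC : C.PosDef) {s : Fin D → ℝ} (hs : s ≠ 0) : C⁻¹ *ᵥ s ≠ 0 := by
  intro h
  apply hs
  have : C *ᵥ (C⁻¹ *ᵥ s) = 0 := by rw [h, Matrix.mulVec_zero]
  rwa [mulVec_mulVec, mul_nonsing_inv C hC.det_pos.ne'.isUnit, one_mulVec] at this

lemma NSNR_pos (hC : C.PosDef) (hCh : Ch.PosDef) {s : Fin D → ℝ} (hs : s ≠ 0) :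
    0 < NSNR C Ch s := by
  rw [NSNR_eq hC hCh]
  have h1 : (Ch⁻¹ *ᵥ s) ⬝ᵥ C *ᵥ (C⁻¹ *ᵥ s) = s ⬝ᵥ Ch⁻¹ *ᵥ s := by
    rw [mulVec_mulVec, mul_nonsing_inv C hC.det_pos.ne'.isUnit, one_mulVec, dotProduct_comm]
  rw [h1]
  exact div_pos (pow_pos (pd_pos hCh.inv hs) 2)
    (mul_pos (pd_pos hC (mulVec_inv_ne hCh hs)) (pd_pos hC (mulVec_inv_ne hC hs)))

lemma NSNR_le_one (hC : C.PosDef) (hCh : Ch.PosDef) (s : Fin D → ℝ) :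
    NSNR C Ch s ≤ 1 := by
  rw [NSNR_eq hC hCh]
  by_cases hs : s = 0
  · simp [hs]
  · exact div_le_one_of_le₀ (cs_le hC _ _)
      (mul_nonneg (pd_pos hC (mulVec_inv_ne hCh hs)).le (pd_pos hC (mulVec_inv_ne hC hs)).le)

lemma NSNR_smul (C Ch : Matrix (Fin D) (Fin D) ℝ) (s : Fin D → ℝ) {c : ℝ} (hc : c ≠ 0) :
    NSNR C Ch (c • s) = NSNR C Ch s := by
  have e : ∀ M : Matrix (Fin D) (Fin D) ℝ, (c • s) ⬝ᵥ M *ᵥ (c • s) = c ^ 2 * (s ⬝ᵥ M *ᵥ s) := by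
    intro M
    simp [Matrix.mulVec_smul, smul_dotProduct, dotProduct_smul, smul_eq_mul]
    ring
  rw [NSNR, NSNR, e, e, e]
  rw [mul_pow, show c ^ 2 * (s ⬝ᵥ (Ch⁻¹ * C * Ch⁻¹) *ᵥ s) * (c ^ 2 * (s ⬝ᵥ C⁻¹ *ᵥ s))
      = (c ^ 2) ^ 2 * ((s ⬝ᵥ (Ch⁻¹ * C * Ch⁻¹) *ᵥ s) * (s ⬝ᵥ C⁻¹ *ᵥ s)) by ring]
  exact mul_div_mul_left _ _ (pow_ne_zero 2 (pow_ne_zero 2 hc))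

lemma NSNR_of_scalar (hCh : Ch.PosDef) {α : ℝ} (hα : 0 < α) {s : Fin D → ℝ} (hs : s ≠ 0) :
    NSNR (α • Ch) Ch s = 1 := by
  haveI := invertibleOfNonzero hα.ne'
  have hdet : IsUnit Ch.det := hCh.det_pos.ne'.isUnit
  have hinv : (α • Ch)⁻¹ = α⁻¹ • Ch⁻¹ := by
    rw [Matrix.inv_smul (A := Ch) α hdet, invOf_eq_inv]
  have hmid : Ch⁻¹ * (α • Ch) * Ch⁻¹ = α • Ch⁻¹ := by
    rw [Matrix.mul_smul, Matrix.smul_mul, Matrix.nonsing_inv_mul Ch hdet, Matrix.one_mul]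
  have ha : 0 < s ⬝ᵥ Ch⁻¹ *ᵥ s := pd_pos hCh.inv hs
  rw [NSNR, hinv, hmid]
  simp only [Matrix.smul_mulVec, dotProduct_smul, smul_eq_mul]
  rw [div_eq_one_iff_eq]
  · ring_nf
    field_simp
  · positivity

lemma eigen_all_scalar (hD : 0 < D) (M : Matrix (Fin D) (Fin D) ℝ)
    (h : ∀ s : Fin D → ℝ, s ≠ 0 → ∃ t : ℝ, M *ᵥ s = t • s) :
    ∃ α : ℝ, M = α • (1 : Matrix (Fin D) (Fin D) ℝ) := by
  have hsingle : ∀ i : Fin D, (Pi.single i 1 : Fin D → ℝ) ≠ 0 := by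
    intro i hi
    simpa using congrFun hi i
  choose t ht using fun i => h (Pi.single i 1) (hsingle i)
  set i0 : Fin D := ⟨0, hD⟩
  refine ⟨t i0, ?_⟩
  have hall : ∀ j, t j = t i0 := by
    intro j
    by_cases hj : j = i0
    · rw [hj]
    · have hs : (Pi.single i0 1 + Pi.single j 1 : Fin D → ℝ) ≠ 0 := by
        intro hc
        have := congrFun hc i0
        simp [Pi.single_eq_of_ne (Ne.symm hj)] at this
      obtain ⟨u, hu⟩ := h _ hs
      rw [Matrix.mulVec_add, ht, ht] at hu
      have h1 := congrFun hu i0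
      have h2 := congrFun hu j
      simp [Pi.single_eq_of_ne (Ne.symm hj), Pi.single_eq_of_ne hj] at h1 h2
      linarith
  ext i j
  have := congrFun (ht j) i
  simp only [Matrix.mulVec_single_one, Matrix.col_apply] at this
  rw [this, hall j]
  by_cases hij : i = j
  · subst hij; simp
  · simp [Pi.single_eq_of_ne hij, Matrix.one_apply_ne hij]

lemma continuous_quad (M : Matrix (Fin D) (Fin D) ℝ) :
    Continuous fun s : Fin D → ℝ => s ⬝ᵥ M *ᵥ s := by
  simp only [dotProduct, mulVec]
  exact continuous_finset_sum _ fun i _ =>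
    (continuous_apply i).mul (continuous_finset_sum _ fun j _ =>
      continuous_const.mul (continuous_apply j))

lemma exists_min (hD : 0 < D) (hC : C.PosDef) (hCh : Ch.PosDef) :
    ∃ s0 : Fin D → ℝ, s0 ≠ 0 ∧ ∀ s : Fin D → ℝ, s ≠ 0 → NSNR C Ch s0 ≤ NSNR C Ch s := by
  have hden : ∀ s : Fin D → ℝ, s ≠ 0 →
      (s ⬝ᵥ (Ch⁻¹ * C * Ch⁻¹) *ᵥ s) * (s ⬝ᵥ C⁻¹ *ᵥ s) ≠ 0 := by
    intro s hs
    have h3 : (Ch⁻¹ *ᵥ s) ⬝ᵥ C *ᵥ (Ch⁻¹ *ᵥ s) = s ⬝ᵥ (Ch⁻¹ * C * Ch⁻¹) *ᵥ s := by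
      rw [Matrix.mul_assoc, ← mulVec_mulVec, quad_sym hCh.inv.1 s, ← mulVec_mulVec,
        quad_sym hC.1, dotProduct_comm]
    rw [← h3]
    exact (mul_pos (pd_pos hC (mulVec_inv_ne hCh hs)) (pd_pos hC.inv hs)).ne'
  have hK : IsCompact (Metric.sphere (0 : Fin D → ℝ) 1) := isCompact_sphere 0 1
  have hne : (Metric.sphere (0 : Fin D → ℝ) 1).Nonempty := by
    have hv : (Pi.single (⟨0, hD⟩ : Fin D) 1 : Fin D → ℝ) ≠ 0 := by
      intro hc; simpa using congrFun hc ⟨0, hD⟩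
    exact ⟨_, mem_sphere_zero_iff_norm.mpr (norm_smul_inv_norm (𝕜 := ℝ) hv)⟩
  have hcont : ContinuousOn (NSNR C Ch) (Metric.sphere (0 : Fin D → ℝ) 1) := by
    apply ContinuousOn.div
    · exact ((continuous_quad Ch⁻¹).pow 2).continuousOn
    · exact ((continuous_quad (Ch⁻¹ * C * Ch⁻¹)).mul (continuous_quad C⁻¹)).continuousOn
    · intro s hs
      exact hden s (norm_ne_zero_iff.mp (by rw [mem_sphere_zero_iff_norm.mp hs]; exact one_ne_zero))
  obtain ⟨s0, hs0mem, hs0min⟩ := hK.exists_isMinOn hne hcont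
  have hs0ne : s0 ≠ 0 :=
    norm_ne_zero_iff.mp (by rw [mem_sphere_zero_iff_norm.mp hs0mem]; exact one_ne_zero)
  refine ⟨s0, hs0ne, fun s hs => ?_⟩
  have hn : ‖s‖ ≠ 0 := norm_ne_zero_iff.mpr hs
  have hmem : (‖s‖⁻¹ • s) ∈ Metric.sphere (0 : Fin D → ℝ) 1 :=
    mem_sphere_zero_iff_norm.mpr (norm_smul_inv_norm (𝕜 := ℝ) hs)
  calc NSNR C Ch s0 ≤ NSNR C Ch (‖s‖⁻¹ • s) := hs0min hmem
    _ = NSNR C Ch s := NSNR_smul C Ch s (inv_ne_zero hn)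

end NSNRAux

open NSNRAux in
/-- The NSNR distance is nonnegative, and it vanishes if and only
if `C = α Ĉ` for some real `α > 0`. -/
theorem dNSNR_nonneg_eq_zero_iff {D : ℕ} (hD : 0 < D)
    (C Ch : Matrix (Fin D) (Fin D) ℝ) (hC : C.PosDef) (hCh : Ch.PosDef) :
    0 ≤ dNSNR C Ch ∧ (dNSNR C Ch = 0 ↔ ∃ α : ℝ, 0 < α ∧ C = α • Ch) := by
  obtain ⟨s0, hs0, hmin⟩ := exists_min hD hC hCh
  haveI : Nonempty {s : Fin D → ℝ // s ≠ 0} := ⟨⟨s0, hs0⟩⟩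
  have hbdd : BddBelow (Set.range fun s : {s : Fin D → ℝ // s ≠ 0} => NSNR C Ch s.1) := by
    refine ⟨0, ?_⟩
    rintro _ ⟨s, rfl⟩
    exact (NSNR_pos hC hCh s.2).le
  have hm_eq : NSNRmin C Ch = NSNR C Ch s0 := by
    refine le_antisymm (ciInf_le hbdd ⟨s0, hs0⟩) (le_ciInf fun s => hmin s.1 s.2)
  have hm_pos : 0 < NSNRmin C Ch := hm_eq ▸ NSNR_pos hC hCh hs0
  have hm_le_one : NSNRmin C Ch ≤ 1 := hm_eq ▸ NSNR_le_one hC hCh s0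
  have hlog : Real.log (NSNRmin C Ch) ≤ 0 := Real.log_nonpos hm_pos.le hm_le_one
  constructor
  · rw [dNSNR]; linarith
  constructor
  · intro h
    have hlog0 : Real.log (NSNRmin C Ch) = 0 := by
      rw [dNSNR] at h; linarith
    have hm1 : NSNRmin C Ch = 1 := by
      rcases Real.log_eq_zero.mp hlog0 with h0 | h1 | h2
      · exact absurd h0 hm_pos.ne'
      · exact h1
      · exfalso; rw [h2] at hm_pos; linarith
    have hall : ∀ s : Fin D → ℝ, s ≠ 0 → NSNR C Ch s = 1 := by
      intro s hs
      refine le_antisymm (NSNR_le_one hC hCh s) ?_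
      calc (1 : ℝ) = NSNRmin C Ch := hm1.symm
        _ ≤ NSNR C Ch s := hm_eq ▸ hmin s hs
    have heig : ∀ s : Fin D → ℝ, s ≠ 0 → ∃ t : ℝ, (C * Ch⁻¹) *ᵥ s = t • s := by
      intro s hs
      have hNS := hall s hs
      rw [NSNR_eq hC hCh] at hNS
      have dp : 0 < ((Ch⁻¹ *ᵥ s) ⬝ᵥ C *ᵥ (Ch⁻¹ *ᵥ s)) * ((C⁻¹ *ᵥ s) ⬝ᵥ C *ᵥ (C⁻¹ *ᵥ s)) :=
        mul_pos (pd_pos hC (mulVec_inv_ne hCh hs)) (pd_pos hC (mulVec_inv_ne hC hs))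
      have heq := (div_eq_one_iff_eq dp.ne').mp hNS
      have hx := cs_eq hC (Ch⁻¹ *ᵥ s) (C⁻¹ *ᵥ s) (mulVec_inv_ne hC hs) heq
      refine ⟨(Ch⁻¹ *ᵥ s ⬝ᵥ C *ᵥ C⁻¹ *ᵥ s) / (C⁻¹ *ᵥ s ⬝ᵥ C *ᵥ C⁻¹ *ᵥ s), ?_⟩
      rw [← mulVec_mulVec, hx, Matrix.mulVec_smul, mulVec_mulVec,
        mul_nonsing_inv C hC.det_pos.ne'.isUnit, one_mulVec]
      have hcc : C⁻¹ *ᵥ s ⬝ᵥ s ≠ 0 := by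
        rw [dotProduct_comm]; exact (pd_pos hC.inv hs).ne'
      rw [smul_dotProduct, smul_eq_mul, mul_div_assoc, div_self hcc, mul_one]
    obtain ⟨α, hM⟩ := eigen_all_scalar hD _ heig
    have hCeq : C = α • Ch := by
      have h1 : C = (C * Ch⁻¹) * Ch := by
        rw [Matrix.mul_assoc, Matrix.nonsing_inv_mul Ch hCh.det_pos.ne'.isUnit, Matrix.mul_one]
      rw [h1, hM, Matrix.smul_mul, Matrix.one_mul]
    have hv : (Pi.single (⟨0, hD⟩ : Fin D) 1 : Fin D → ℝ) ≠ 0 := by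
      intro hc; simpa using congrFun hc ⟨0, hD⟩
    have hpos1 := pd_pos hC hv
    have hpos2 := pd_pos hCh hv
    rw [hCeq] at hpos1
    simp only [Matrix.smul_mulVec, dotProduct_smul, smul_eq_mul] at hpos1
    have hα : 0 < α := by
      by_contra hneg
      push_neg at hneg
      nlinarith
    exact ⟨α, hα, hCeq⟩
  · rintro ⟨α, hα, rfl⟩
    have hm1 : NSNRmin (α • Ch) Ch = 1 := by
      refine le_antisymm ?_ (le_ciInf fun s => (NSNR_of_scalar hCh hα s.2).ge)
      have hv : (Pi.single (⟨0, hD⟩ : Fin D) 1 : Fin D → ℝ) ≠ 0 := by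
        intro hc; simpa using congrFun hc ⟨0, hD⟩
      have hbdd' : BddBelow (Set.range fun s : {s : Fin D → ℝ // s ≠ 0} =>
          NSNR (α • Ch) Ch s.1) := by
        refine ⟨0, ?_⟩
        rintro _ ⟨s, rfl⟩
        exact (NSNR_pos hC hCh s.2).le
      calc NSNRmin (α • Ch) Ch ≤ NSNR (α • Ch) Ch (Pi.single ⟨0, hD⟩ 1) :=
            ciInf_le hbdd' ⟨_, hv⟩
        _ = 1 := NSNR_of_scalar hCh hα hv
    rw [dNSNR, hm1, Real.log_one, mul_zero]
end

section
/- Counterexample to norm-based metrics: let 0 < α < 1 and let C = diag(1, α, α²) and Ĉ = diag(1, α², α) be 3×3 diagonal matrices. Then the Frobenius distance is ‖C − Ĉ‖_F = √2·(α − α²), the spectral (operator 2-norm) distance is ‖C − Ĉ‖_2 = α − α², and the NSNR distance is d_NSNR(C, Ĉ) = log((1 + α²)/(2α)). -/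
open Matrix

/-- Quadratic form of a diagonal 3×3 matrix. -/
lemma quadform3 (d s : Fin 3 → ℝ) :
    s ⬝ᵥ (Matrix.diagonal d) *ᵥ s = d 0 * (s 0)^2 + d 1 * (s 1)^2 + d 2 * (s 2)^2 := by
  simp [dotProduct, mulVec_diagonal, Fin.sum_univ_three]
  ring

/-- The key Kantorovich-type inequality. -/
lemma keyineq (α β x y z : ℝ) (hα : 0 < α) (hβ : 0 < β) (hαβ : α * β = 1)
    (hx : 0 ≤ x) (hy : 0 ≤ y) (hz : 0 ≤ z) :
    (2*α/(1+α^2))^2 * ((x + β^3*y + z) * (x + β*y + β^2*z)) ≤ (x + β^2*y + β*z)^2 := by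
  have h1e : (α+β)*(x+β^2*y+β*z) - ((x+β^3*y+z)+(x+β*y+β^2*z)) = β*(α-1)^2*x := by
    linear_combination (2*x - α*x + β*y + z) * hαβ
  have h1 : (x + β^3*y + z) + (x + β*y + β^2*z) ≤ (α + β) * (x + β^2*y + β*z) := by
    nlinarith [mul_nonneg (mul_nonneg hβ.le hx) (sq_nonneg (α - 1))]
  have hBE : 0 ≤ (x + β^3*y + z) + (x + β*y + β^2*z) := by positivity
  have h2 : ((x + β^3*y + z) + (x + β*y + β^2*z))^2 ≤ ((α + β) * (x + β^2*y + β*z))^2 :=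
    pow_le_pow_left₀ hBE h1 2
  have h3 : 4 * ((x + β^3*y + z) * (x + β*y + β^2*z)) ≤ (α+β)^2 * (x + β^2*y + β*z)^2 := by
    nlinarith [sq_nonneg ((x + β^3*y + z) - (x + β*y + β^2*z))]
  have hid : α^2*(α+β)^2 = (1+α^2)^2 := by
    linear_combination (2*α^2 + α*β + 1) * hαβ
  have h4 := mul_le_mul_of_nonneg_left h3 (sq_nonneg α)
  rw [div_pow, div_mul_eq_mul_div, div_le_iff₀ (by positivity)]
  nlinarith [h4, hid]

/-- **counterexample to norm-based metrics.** For `0 < α < 1`, with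
`C = diag(1, α, α²)` and `Ĉ = diag(1, α², α)`, the Frobenius distance is
`√2·(α − α²)`, the spectral (operator 2-)norm distance is `α − α²`, while the NSNR
distance is `log((1 + α²)/(2α))`. -/
theorem norm_metrics_counterexample (α : ℝ) (hα0 : 0 < α) (hα1 : α < 1)
    (C Ch : Matrix (Fin 3) (Fin 3) ℝ)
    (hCdef : C = Matrix.diagonal ![1, α, α ^ 2])
    (hChdef : Ch = Matrix.diagonal ![1, α ^ 2, α]) :
    Real.sqrt (∑ i, ∑ j, (C i j - Ch i j) ^ 2) = Real.sqrt 2 * (α - α ^ 2) ∧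
      ‖Matrix.toEuclideanCLM (𝕜 := ℝ) (C - Ch)‖ = α - α ^ 2 ∧
      dNSNR C Ch = Real.log ((1 + α ^ 2) / (2 * α)) := by
  have hne : α ≠ 0 := hα0.ne'
  have hc : 0 ≤ α - α^2 := by nlinarith
  refine ⟨?_, ?_, ?_⟩
  · -- Frobenius norm
    have hsum : (∑ i, ∑ j, (C i j - Ch i j) ^ 2) = 2 * (α - α^2)^2 := by
      subst hCdef hChdef
      simp [Fin.sum_univ_three, Matrix.diagonal]
      ring
    rw [hsum, show (2 : ℝ) * (α - α^2)^2 = 2 * (α - α^2)^2 from rfl,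
      Real.sqrt_mul (by norm_num : (0:ℝ) ≤ 2), Real.sqrt_sq hc]
  · -- spectral norm
    have hdiff : C - Ch = Matrix.diagonal ![0, α - α^2, α^2 - α] := by
      subst hCdef hChdef
      ext i j
      fin_cases i <;> fin_cases j <;> simp [Matrix.diagonal]
    rw [hdiff]
    set d : Fin 3 → ℝ := ![0, α - α^2, α^2 - α] with hd
    set T := Matrix.toEuclideanCLM (𝕜 := ℝ) (Matrix.diagonal d) with hT
    have hTx : ∀ x : EuclideanSpace ℝ (Fin 3),
        T x = (WithLp.equiv 2 (Fin 3 → ℝ)).symm ((Matrix.diagonal d) *ᵥ (WithLp.equiv 2 _ x)) := by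
      intro x
      rw [hT]
      rw [show x = (WithLp.equiv 2 (Fin 3 → ℝ)).symm ((WithLp.equiv 2 _) x) from rfl]
      rw [WithLp.equiv_symm_apply, Matrix.toEuclideanCLM_toLp]
      simp [Matrix.toLin'_apply]
    apply le_antisymm
    · apply ContinuousLinearMap.opNorm_le_bound _ hc
      intro x
      rw [hTx x]
      rw [EuclideanSpace.norm_eq, EuclideanSpace.norm_eq]
      rw [show (α - α^2) = Real.sqrt ((α - α^2)^2) from (Real.sqrt_sq hc).symm]
      rw [← Real.sqrt_mul (by positivity)]
      apply Real.sqrt_le_sqrt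
      simp only [WithLp.equiv_symm_apply, PiLp.toLp_apply, Matrix.mulVec_diagonal, Fin.sum_univ_three,
        Real.norm_eq_abs, sq_abs]
      have h1 : d 1 = α - α^2 := rfl
      have h2 : d 2 = α^2 - α := rfl
      have h0 : d 0 = 0 := rfl
      rw [h0, h1, h2]
      have hxe : ∀ i, (WithLp.equiv 2 (Fin 3 → ℝ)) x i = x i := fun _ => rfl
      simp only [hxe]
      nlinarith [mul_nonneg (sq_nonneg (α - α^2)) (sq_nonneg (x 0))]
    · have he : ‖(EuclideanSpace.single 1 (1:ℝ) : EuclideanSpace ℝ (Fin 3))‖ = 1 := by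
        simp [EuclideanSpace.norm_single]
      have := T.le_opNorm (EuclideanSpace.single 1 (1:ℝ))
      rw [he, mul_one, hTx] at this
      refine le_trans (le_of_eq ?_) this
      rw [show ((WithLp.equiv 2 (Fin 3 → ℝ)) (EuclideanSpace.single 1 (1:ℝ))) = Pi.single 1 1 from
        rfl]
      rw [Matrix.diagonal_mulVec_single]
      rw [show ((WithLp.equiv 2 (Fin 3 → ℝ)).symm (Pi.single 1 (d 1 * 1)) : EuclideanSpace ℝ (Fin 3))
        = EuclideanSpace.single 1 (d 1 * 1) from rfl]
      rw [EuclideanSpace.norm_single]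
      simp [hd]
      exact (abs_of_nonneg hc).symm
  · -- NSNR distance
    have hβ : (0:ℝ) < α⁻¹ := by positivity
    have hαβ : α * α⁻¹ = 1 := mul_inv_cancel₀ hne
    have hβ1 : (1:ℝ) ≤ α⁻¹ := by nlinarith
    have hChinv : Ch⁻¹ = Matrix.diagonal ![1, α⁻¹^2, α⁻¹] := by
      rw [hChdef]
      apply Matrix.inv_eq_right_inv
      ext i j
      fin_cases i <;> fin_cases j <;>
        simp [Matrix.mul_apply, Fin.sum_univ_three, Matrix.diagonal, Matrix.one_apply] <;>
        field_simp
    have hCinv : C⁻¹ = Matrix.diagonal ![1, α⁻¹, α⁻¹^2] := by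
      rw [hCdef]
      apply Matrix.inv_eq_right_inv
      ext i j
      fin_cases i <;> fin_cases j <;>
        simp [Matrix.mul_apply, Fin.sum_univ_three, Matrix.diagonal, Matrix.one_apply] <;>
        field_simp
    have hMid : Ch⁻¹ * C * Ch⁻¹ = Matrix.diagonal ![1, α⁻¹^3, 1] := by
      rw [hChinv, hCdef]
      ext i j
      fin_cases i <;> fin_cases j <;>
        simp [Matrix.mul_apply, Fin.sum_univ_three, Matrix.diagonal] <;>
        field_simp <;> ring
    have hval : ∀ s : Fin 3 → ℝ, NSNR C Ch s =
        (s 0^2 + α⁻¹^2 * s 1^2 + α⁻¹ * s 2^2)^2 /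
          ((s 0^2 + α⁻¹^3 * s 1^2 + s 2^2) * (s 0^2 + α⁻¹ * s 1^2 + α⁻¹^2 * s 2^2)) := by
      intro s
      rw [NSNR, hMid, hChinv, hCinv, quadform3, quadform3, quadform3]
      norm_num [Matrix.cons_val_two, Matrix.vecHead, Matrix.vecTail]
    have hlb : ∀ s : {s : Fin 3 → ℝ // s ≠ 0}, (2*α/(1+α^2))^2 ≤ NSNR C Ch s.1 := by
      rintro ⟨s, hs⟩
      have hx : (0:ℝ) ≤ s 0^2 := sq_nonneg _
      have hy : (0:ℝ) ≤ s 1^2 := sq_nonneg _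
      have hz : (0:ℝ) ≤ s 2^2 := sq_nonneg _
      have hxyz : 0 < s 0^2 + s 1^2 + s 2^2 := by
        rcases Function.ne_iff.mp hs with ⟨i, hi⟩
        have hi' : s i ≠ 0 := hi
        have hpos : (0:ℝ) < s i ^ 2 := by positivity
        have hsum : 0 < ∑ j : Fin 3, s j ^ 2 :=
          Finset.sum_pos' (fun j _ => sq_nonneg _) ⟨i, Finset.mem_univ i, hpos⟩
        rwa [Fin.sum_univ_three] at hsum
      have hβ3 : (1:ℝ) ≤ α⁻¹^3 := one_le_pow₀ hβ1
      have hβ2 : (1:ℝ) ≤ α⁻¹^2 := one_le_pow₀ hβ1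
      have hB : 0 < s 0^2 + α⁻¹^3 * s 1^2 + s 2^2 := by nlinarith
      have hE : 0 < s 0^2 + α⁻¹ * s 1^2 + α⁻¹^2 * s 2^2 := by nlinarith
      rw [hval, le_div_iff₀ (mul_pos hB hE)]
      exact keyineq α α⁻¹ _ _ _ hα0 hβ hαβ hx hy hz
    have hsne : (![0, Real.sqrt α, 1] : Fin 3 → ℝ) ≠ 0 := by
      intro h
      have := congrFun h 2
      simp at this
    have hub : NSNR C Ch ![0, Real.sqrt α, 1] = (2*α/(1+α^2))^2 := by
      rw [hval]
      have h0 : (![0, Real.sqrt α, 1] : Fin 3 → ℝ) 0 = 0 := rfl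
      have h1 : (![0, Real.sqrt α, 1] : Fin 3 → ℝ) 1 = Real.sqrt α := rfl
      have h2 : (![0, Real.sqrt α, 1] : Fin 3 → ℝ) 2 = 1 := rfl
      rw [h0, h1, h2, Real.sq_sqrt hα0.le]
      field_simp
      ring
    haveI : Nonempty {s : Fin 3 → ℝ // s ≠ 0} := ⟨⟨_, hsne⟩⟩
    have hmin : NSNRmin C Ch = (2*α/(1+α^2))^2 := by
      apply le_antisymm
      · calc NSNRmin C Ch ≤ NSNR C Ch ![0, Real.sqrt α, 1] := by
              apply ciInf_le ⟨(2*α/(1+α^2))^2, ?_⟩ (⟨_, hsne⟩ : {s : Fin 3 → ℝ // s ≠ 0})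
              rintro v ⟨s, rfl⟩
              exact hlb s
            _ = (2*α/(1+α^2))^2 := hub
      · exact le_ciInf hlb
    rw [dNSNR, hmin, Real.log_pow]
    rw [show (-(1/2) : ℝ) * ((2:ℕ) * Real.log (2*α/(1+α^2))) = -Real.log (2*α/(1+α^2)) by
      push_cast; ring]
    rw [← Real.log_inv, inv_div]
end

section
/- The NSNR distance is unbounded even as the Frobenius distance tends to zero: for the matrices C = diag(1, α, α²) and Ĉ = diag(1, α², α) with 0 < α < 1, as α → 0⁺ one has ‖C − Ĉ‖_F → 0 while d_NSNR(C, Ĉ) = log((1 + α²)/(2α)) → +∞; in particular, for every M > 0 and ε > 0 there exists α ∈ (0,1) with ‖C − Ĉ‖_F < ε and d_NSNR(C, Ĉ) > M. -/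
open Matrix

lemma diag_inv3 (v : Fin 3 → ℝ) (h : ∀ i, v i ≠ 0) :
    (diagonal v)⁻¹ = diagonal (fun i => (v i)⁻¹) := by
  apply inv_eq_right_inv
  rw [diagonal_mul_diagonal]
  convert diagonal_one with i
  exact mul_inv_cancel₀ (h i)

lemma pos3 (c0 c1 c2 : ℝ) (h0 : 0 < c0) (h1 : 0 < c1) (h2 : 0 < c2)
    (s : Fin 3 → ℝ) (hs : s ≠ 0) :
    0 < s 0 ^ 2 * c0 + s 1 ^ 2 * c1 + s 2 ^ 2 * c2 := by
  have h : s 0 ≠ 0 ∨ s 1 ≠ 0 ∨ s 2 ≠ 0 := by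
    by_contra hcon
    push_neg at hcon
    apply hs
    funext i
    fin_cases i <;> simp [hcon.1, hcon.2.1, hcon.2.2]
  rcases h with h | h | h <;>
    nlinarith [mul_pos (pow_pos (abs_pos.mpr h) 2) h0, mul_pos (pow_pos (abs_pos.mpr h) 2) h1,
      mul_pos (pow_pos (abs_pos.mpr h) 2) h2, sq_abs (s 0), sq_abs (s 1), sq_abs (s 2),
      mul_nonneg (sq_nonneg (s 0)) h0.le, mul_nonneg (sq_nonneg (s 1)) h1.le,
      mul_nonneg (sq_nonneg (s 2)) h2.le]

lemma NSNR_eq (α : ℝ) (hα : 0 < α) (s : Fin 3 → ℝ) (hs : s ≠ 0) :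
    NSNR (diagonal ![1, α, α ^ 2]) (diagonal ![1, α ^ 2, α]) s =
      (s 0 ^ 2 * α ^ 3 + s 1 ^ 2 * α + s 2 ^ 2 * α ^ 2) ^ 2 /
        (α * ((s 0 ^ 2 * α ^ 3 + s 1 ^ 2 * 1 + s 2 ^ 2 * α ^ 3) *
          (s 0 ^ 2 * α ^ 2 + s 1 ^ 2 * α + s 2 ^ 2 * 1))) := by
  have h1 : (∀ i, (![1, α, α ^ 2] : Fin 3 → ℝ) i ≠ 0) := by
    intro i; fin_cases i <;> simp <;> positivity
  have h2 : (∀ i, (![1, α ^ 2, α] : Fin 3 → ℝ) i ≠ 0) := by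
    intro i; fin_cases i <;> simp <;> positivity
  unfold NSNR
  rw [diag_inv3 _ h1, diag_inv3 _ h2]
  simp only [diagonal_mul_diagonal, mulVec_diagonal, dotProduct, Fin.sum_univ_three,
    Matrix.cons_val_zero, Matrix.cons_val_one, Matrix.head_cons, Matrix.cons_val_two,
    Matrix.tail_cons]
  have hd1 : (0:ℝ) < (s 0 * (1⁻¹ * 1 * 1⁻¹ * s 0) + s 1 * ((α ^ 2)⁻¹ * α * (α ^ 2)⁻¹ * s 1) +
      s 2 * (α⁻¹ * α ^ 2 * α⁻¹ * s 2)) := by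
    rw [show (s 0 * (1⁻¹ * 1 * 1⁻¹ * s 0) + s 1 * ((α ^ 2)⁻¹ * α * (α ^ 2)⁻¹ * s 1) +
      s 2 * (α⁻¹ * α ^ 2 * α⁻¹ * s 2)) =
      s 0 ^ 2 * 1 + s 1 ^ 2 * ((α ^ 2)⁻¹ * α * (α ^ 2)⁻¹) + s 2 ^ 2 * (α⁻¹ * α ^ 2 * α⁻¹)
      from by ring]
    exact pos3 _ _ _ one_pos (by positivity) (by positivity) s hs
  have hd2 : (0:ℝ) < (s 0 * (1⁻¹ * s 0) + s 1 * (α⁻¹ * s 1) + s 2 * ((α ^ 2)⁻¹ * s 2)) := by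
    rw [show (s 0 * (1⁻¹ * s 0) + s 1 * (α⁻¹ * s 1) + s 2 * ((α ^ 2)⁻¹ * s 2)) =
      s 0 ^ 2 * 1⁻¹ + s 1 ^ 2 * α⁻¹ + s 2 ^ 2 * (α ^ 2)⁻¹ from by ring]
    exact pos3 _ _ _ (by norm_num) (by positivity) (by positivity) s hs
  have hP : (0:ℝ) < s 0 ^ 2 * α ^ 3 + s 1 ^ 2 * 1 + s 2 ^ 2 * α ^ 3 :=
    pos3 _ _ _ (by positivity) one_pos (by positivity) s hs
  have hQ : (0:ℝ) < s 0 ^ 2 * α ^ 2 + s 1 ^ 2 * α + s 2 ^ 2 * 1 :=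
    pos3 _ _ _ (by positivity) hα one_pos s hs
  rw [div_eq_div_iff (mul_pos hd1 hd2).ne' (mul_pos hα (mul_pos hP hQ)).ne']
  field_simp

lemma NSNR_ge (α : ℝ) (hα : 0 < α) (s : Fin 3 → ℝ) (hs : s ≠ 0) :
    4 * α ^ 2 / (1 + α ^ 2) ^ 2 ≤ NSNR (diagonal ![1, α, α ^ 2]) (diagonal ![1, α ^ 2, α]) s := by
  rw [NSNR_eq α hα s hs]
  set N := s 0 ^ 2 * α ^ 3 + s 1 ^ 2 * α + s 2 ^ 2 * α ^ 2 with hN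
  set P := s 0 ^ 2 * α ^ 3 + s 1 ^ 2 * 1 + s 2 ^ 2 * α ^ 3 with hPdef
  set Q := s 0 ^ 2 * α ^ 2 + s 1 ^ 2 * α + s 2 ^ 2 * 1 with hQdef
  have hNpos : 0 < N := pos3 _ _ _ (by positivity) (by positivity) (by positivity) s hs
  have hPpos : 0 < P := pos3 _ _ _ (by positivity) one_pos (by positivity) s hs
  have hQpos : 0 < Q := pos3 _ _ _ (by positivity) (by positivity) one_pos s hs
  rw [div_le_div_iff₀ (by positivity) (by positivity)]
  have key : (1 + α ^ 2) * N - (α * P + α ^ 2 * Q) = s 0 ^ 2 * (α ^ 3 * (1 - α) ^ 2) := by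
    rw [hN, hPdef, hQdef]; ring
  have h1 : α * P + α ^ 2 * Q ≤ (1 + α ^ 2) * N := by
    nlinarith [mul_nonneg (sq_nonneg (s 0)) (by positivity : (0:ℝ) ≤ α ^ 3 * (1 - α) ^ 2)]
  have hsum : 0 ≤ α * P + α ^ 2 * Q := by positivity
  have h2 : (α * P + α ^ 2 * Q) ^ 2 ≤ ((1 + α ^ 2) * N) ^ 2 := pow_le_pow_left₀ hsum h1 2
  nlinarith [h2, sq_nonneg (α * P - α ^ 2 * Q)]

lemma NSNR_witness (α : ℝ) (hα : 0 < α) :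
    NSNR (diagonal ![1, α, α ^ 2]) (diagonal ![1, α ^ 2, α]) ![0, α, Real.sqrt α] =
      4 * α ^ 2 / (1 + α ^ 2) ^ 2 := by
  have hs : (![0, α, Real.sqrt α] : Fin 3 → ℝ) ≠ 0 := by
    intro h
    have := congrFun h 1
    simp at this
    exact hα.ne' this
  rw [NSNR_eq α hα _ hs]
  simp only [Matrix.cons_val_zero, Matrix.cons_val_one, Matrix.head_cons, Matrix.cons_val_two,
    Matrix.tail_cons]
  rw [Real.sq_sqrt hα.le]
  have h1 : (0:ℝ) < 1 + α ^ 2 := by positivity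
  rw [div_eq_div_iff (by positivity) (by positivity)]
  ring

lemma NSNRmin_eq (α : ℝ) (hα : 0 < α) :
    NSNRmin (diagonal ![1, α, α ^ 2]) (diagonal ![1, α ^ 2, α]) = 4 * α ^ 2 / (1 + α ^ 2) ^ 2 := by
  have hs : (![0, α, Real.sqrt α] : Fin 3 → ℝ) ≠ 0 := by
    intro h
    have := congrFun h 1
    simp at this
    exact hα.ne' this
  have hne : Nonempty {s : Fin 3 → ℝ // s ≠ 0} := ⟨⟨![0, α, Real.sqrt α], hs⟩⟩
  unfold NSNRmin
  apply le_antisymm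
  · have hb : BddBelow (Set.range fun s : {s : Fin 3 → ℝ // s ≠ 0} =>
        NSNR (diagonal ![1, α, α ^ 2]) (diagonal ![1, α ^ 2, α]) s.1) := by
      refine ⟨4 * α ^ 2 / (1 + α ^ 2) ^ 2, ?_⟩
      rintro x ⟨⟨s, hsne⟩, rfl⟩
      exact NSNR_ge α hα s hsne
    have := ciInf_le hb ⟨![0, α, Real.sqrt α], hs⟩
    rwa [NSNR_witness α hα] at this
  · exact le_ciInf fun ⟨s, hsne⟩ => NSNR_ge α hα s hsne

lemma dNSNR_eq (α : ℝ) (hα : 0 < α) :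
    dNSNR (diagonal ![1, α, α ^ 2]) (diagonal ![1, α ^ 2, α]) =
      Real.log ((1 + α ^ 2) / (2 * α)) := by
  unfold dNSNR
  rw [NSNRmin_eq α hα]
  have h1 : 4 * α ^ 2 / (1 + α ^ 2) ^ 2 = (2 * α / (1 + α ^ 2)) ^ 2 := by
    rw [div_pow]; ring_nf
  rw [h1, Real.log_pow]
  push_cast
  rw [show -(1/2:ℝ) * (2 * Real.log (2 * α / (1 + α ^ 2))) = -Real.log (2 * α / (1 + α ^ 2))
    from by ring, ← Real.log_inv, inv_div]

open Filter Topology in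
/-- For `C(α) = diag(1, α, α²)` and `Ĉ(α) = diag(1, α², α)`: as
`α → 0⁺` the Frobenius distance `‖C − Ĉ‖_F` tends to `0` while
`d_NSNR(C, Ĉ) = log((1 + α²)/(2α))` (for `α ∈ (0,1)`) tends to `+∞`; in particular,
for every `M > 0` and `ε > 0` there is `α ∈ (0,1)` with `‖C − Ĉ‖_F < ε` and
`d_NSNR(C, Ĉ) > M`. -/
theorem dNSNR_unbounded_frobenius_small
    (C Ch : ℝ → Matrix (Fin 3) (Fin 3) ℝ)
    (hCdef : ∀ α : ℝ, C α = Matrix.diagonal ![1, α, α ^ 2])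
    (hChdef : ∀ α : ℝ, Ch α = Matrix.diagonal ![1, α ^ 2, α]) :
    Tendsto (fun α : ℝ => Real.sqrt (∑ i, ∑ j, (C α i j - Ch α i j) ^ 2))
      (𝓝[>] 0) (𝓝 0) ∧
    (∀ α ∈ Set.Ioo (0 : ℝ) 1, dNSNR (C α) (Ch α) = Real.log ((1 + α ^ 2) / (2 * α))) ∧
    Tendsto (fun α : ℝ => dNSNR (C α) (Ch α)) (𝓝[>] 0) atTop ∧
    ∀ M > (0 : ℝ), ∀ ε > (0 : ℝ), ∃ α ∈ Set.Ioo (0 : ℝ) 1,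
      Real.sqrt (∑ i, ∑ j, (C α i j - Ch α i j) ^ 2) < ε ∧ dNSNR (C α) (Ch α) > M := by
  have hdiff : ∀ α : ℝ, (∑ i, ∑ j, (C α i j - Ch α i j) ^ 2) =
      (α - α ^ 2) ^ 2 + (α ^ 2 - α) ^ 2 := by
    intro α
    rw [hCdef, hChdef]
    simp [Fin.sum_univ_three, Matrix.diagonal]
  have part1 : Tendsto (fun α : ℝ => Real.sqrt (∑ i, ∑ j, (C α i j - Ch α i j) ^ 2))
      (𝓝[>] 0) (𝓝 0) := by
    simp only [hdiff]
    have h0 : Real.sqrt ((0 - (0:ℝ) ^ 2) ^ 2 + ((0:ℝ) ^ 2 - 0) ^ 2) = 0 := by norm_num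
    have hc : Tendsto (fun α : ℝ => Real.sqrt ((α - α ^ 2) ^ 2 + (α ^ 2 - α) ^ 2)) (𝓝 0)
        (𝓝 0) := by
      have hcont : Continuous fun α : ℝ => (α - α ^ 2) ^ 2 + (α ^ 2 - α) ^ 2 :=
        (((continuous_id.sub (continuous_pow 2)).pow 2).add
          (((continuous_pow 2).sub continuous_id).pow 2))
      have ht := (hcont.sqrt).tendsto 0
      rw [h0] at ht
      exact ht
    exact hc.mono_left nhdsWithin_le_nhds
  have part2 : ∀ α ∈ Set.Ioo (0 : ℝ) 1, dNSNR (C α) (Ch α) =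
      Real.log ((1 + α ^ 2) / (2 * α)) := by
    intro α hα
    rw [hCdef, hChdef]
    exact dNSNR_eq α hα.1
  have part3 : Tendsto (fun α : ℝ => dNSNR (C α) (Ch α)) (𝓝[>] 0) atTop := by
    have hev : ∀ᶠ α in 𝓝[>] (0:ℝ), Real.log ((1 + α ^ 2) / (2 * α)) = dNSNR (C α) (Ch α) := by
      filter_upwards [self_mem_nhdsWithin] with α hα
      rw [hCdef, hChdef, dNSNR_eq α hα]
    have h2a : Tendsto (fun α : ℝ => 2 * α) (𝓝[>] (0:ℝ)) (𝓝[>] (0:ℝ)) := by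
      apply tendsto_nhdsWithin_of_tendsto_nhds_of_eventually_within
      · have ht := (continuous_mul_left (2:ℝ)).tendsto 0
        rw [mul_zero] at ht
        exact ht.mono_left nhdsWithin_le_nhds
      · filter_upwards [self_mem_nhdsWithin] with α hα
        have : (0:ℝ) < α := hα
        simp only [Set.mem_Ioi]
        linarith
    have hbase : Tendsto (fun α : ℝ => (2 * α)⁻¹) (𝓝[>] (0:ℝ)) atTop :=
      h2a.inv_tendsto_nhdsGT_zero
    have hinner : Tendsto (fun α : ℝ => (1 + α ^ 2) / (2 * α)) (𝓝[>] (0:ℝ)) atTop := by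
      apply tendsto_atTop_mono' _ _ hbase
      filter_upwards [self_mem_nhdsWithin] with α hα
      have h0 : (0:ℝ) < α := hα
      rw [inv_eq_one_div]
      gcongr
      all_goals nlinarith
    exact Tendsto.congr' hev (Real.tendsto_log_atTop.comp hinner)
  refine ⟨part1, part2, part3, ?_⟩
  intro M hM ε hε
  have hev1 : ∀ᶠ α in 𝓝[>] (0:ℝ),
      Real.sqrt (∑ i, ∑ j, (C α i j - Ch α i j) ^ 2) < ε := part1.eventually_lt_const hε
  have hev2 : ∀ᶠ α in 𝓝[>] (0:ℝ), dNSNR (C α) (Ch α) > M := part3.eventually_gt_atTop M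
  have hev3 : ∀ᶠ α in 𝓝[>] (0:ℝ), α ∈ Set.Ioo (0:ℝ) 1 :=
    Ioo_mem_nhdsGT_of_mem ⟨le_refl 0, one_pos⟩
  obtain ⟨α, h3, h1, h2⟩ := (hev3.and (hev1.and hev2)).exists
  exact ⟨α, h3, h1, h2⟩
end
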